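/- arXiv:1810.04210 — 7 statements merged into one kernel-verified Lean document; each statement's English description precedes it below -/
import Mathlib

section
/- Assume that μ is a finite measure and that f is bijective and bi-Lipschitz with respect to μ, i.e., there exist constants c₂ > c₁ > 0 such that c₁·μ(B) ≤ μ(f(B)) ≤ c₂·μ(B) for every B ∈ 𝓑. Then the composition operator T_f on L^p(X,𝓑,μ) is Li-Yorke chaotic if and only if its inverse T_f^{-1} = T_{f^{-1}} is Li-Yorke chaotic. -/
/-!
Li–Yorke chaos of a continuous linear operator `A` is equivalent to the existence of a
semi-irregular vector, `liminf ‖Aⁿ v‖ = 0 < limsup ‖Aⁿ v‖`: differences of points of a scrambled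
set are semi-irregular, and the real multiples of a semi-irregular vector form a scrambled set.
For the composition operator `T_f` this becomes a property of sets: by Chebyshev's inequality a
semi-irregular `u` has a level set `B`, `μ B > 0`, with `liminf μ (f⁻ⁿ B) = 0`, and conversely
`1_U` is semi-irregular as soon as `μ (f⁻ⁿ U)` has liminf `0` and a positive limsup.

For `T_{f⁻¹}` such a `U` is needed with `μ (fⁿ U)` in place of `μ (f⁻ⁿ U)`. It is built from `B`
using that `μ` is finite and that `f` and `f⁻¹` change measures by at most a finite factor `K`.
First `B` is shrunk to a set `C`, `μ C > 0`, with `liminf μ (f⁻ⁿ C) = liminf μ (fⁿ C) = 0`: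
remove from `B` the sets `f^{-k_L} (B ∪ f B ∪ ⋯ ∪ fᴸ B)` at times `k_L > L` where they are small.
Then `f^{k_L} C` misses `B ∪ ⋯ ∪ fᴸ B`, so it lies in the rest of `⋃ₙ fⁿ B`, whose measure tends
to `0`. Next, for times `p₀ < m₀ < p₁ < m₁ < ⋯` the set `U = ⋃ⱼ f^{-p_j} C` has `f^{p_j} U ⊇ C`,
while in `f^{m_k} U` the pieces with `j ≤ k` are small because `μ (f^{m_k} C)` is, and those with
`j > k` because `μ (f^{-p_j} C)` is. Each time is chosen after the previous ones, so that it
beats the distortion factor `K^{p_k}`, resp. `K^{m_{j-1}}`, created by them.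
-/

open MeasureTheory Filter Set Topology
open scoped ENNReal

noncomputable section

/-- A continuous self-map `g` of a metric space is *Li-Yorke chaotic* if there is an
uncountable set `S` (a scrambled set) such that every pair of distinct points `x, y ∈ S`
satisfies `liminf dist (gⁿ x) (gⁿ y) = 0` and `limsup dist (gⁿ x) (gⁿ y) > 0`. -/
def LiYorkeChaotic {M : Type*} [PseudoMetricSpace M] (g : M → M) : Prop :=
  ∃ S : Set M, ¬ S.Countable ∧ ∀ x ∈ S, ∀ y ∈ S, x ≠ y →
    (∀ ε > 0, ∃ᶠ n in atTop, dist (g^[n] x) (g^[n] y) < ε) ∧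
    (∃ ε > 0, ∃ᶠ n in atTop, ε < dist (g^[n] x) (g^[n] y))

open Function

section Sequences

variable {ι : Type*} {l : Filter ι} {c : ℝ≥0∞} {q : ℝ}

lemma monotone_const_mul_rpow (hq : 0 ≤ q) : Monotone fun x : ℝ≥0∞ => c * x ^ q :=
  fun _ _ h => mul_le_mul_right (ENNReal.rpow_le_rpow h hq) c

lemma continuous_const_mul_rpow (hc : c ≠ ∞) : Continuous fun x : ℝ≥0∞ => c * x ^ q :=
  (ENNReal.continuous_const_mul hc).comp ENNReal.continuous_rpow_const

lemma liminf_const_mul_rpow [l.NeBot] {a : ι → ℝ≥0∞} (hc : c ≠ ∞) (hq : 0 ≤ q) :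
    liminf (fun i => c * a i ^ q) l = c * liminf a l ^ q :=
  ((monotone_const_mul_rpow hq).map_liminf_of_continuousAt a
    (continuous_const_mul_rpow hc).continuousAt).symm

lemma limsup_const_mul_rpow [l.NeBot] {a : ι → ℝ≥0∞} (hc : c ≠ ∞) (hq : 0 ≤ q) :
    limsup (fun i => c * a i ^ q) l = c * limsup a l ^ q :=
  ((monotone_const_mul_rpow hq).map_limsup_of_continuousAt a
    (continuous_const_mul_rpow hc).continuousAt).symm

lemma exists_gt_mul_lt_of_liminf_eq_zero {a : ℕ → ℝ≥0∞} (h : liminf a atTop = 0) {ε : ℝ≥0∞}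
    (hc : c ≠ ∞) (hε : ε ≠ 0) (N : ℕ) : ∃ n > N, c * a n < ε := by
  have : liminf a atTop < ε / c := h ▸ ENNReal.div_pos_iff.2 ⟨hε, hc⟩
  obtain ⟨n, hn, hlt⟩ :=
    (frequently_lt_of_liminf_lt (by isBoundedDefault) this).forall_exists_of_atTop (N + 1)
  exact ⟨n, hn, mul_comm c (a n) ▸ ENNReal.mul_lt_of_lt_div hlt⟩

lemma liminf_eq_zero_of_tendsto_comp {a : ℕ → ℝ≥0∞} {k : ℕ → ℕ} (hk : Tendsto k atTop atTop)
    (h : Tendsto (a ∘ k) atTop (𝓝 0)) : liminf a atTop = 0 :=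
  le_antisymm ((liminf_le_liminf_of_le hk).trans_eq
    ((liminf_comp a k atTop).symm.trans h.liminf_eq)) zero_le

lemma exists_interleaved {P M : ℕ → ℕ → ℕ → Prop} (hP : ∀ k N, ∃ n > N, P k N n)
    (hM : ∀ k N, ∃ n > N, M k N n) :
    ∃ p q : ℕ → ℕ, ∀ k, q k < p k ∧ p k < q (k + 1) ∧ P k (q k) (p k) ∧ M k (p k) (q (k + 1)) := by
  choose P' hP'lt hP' using hP
  choose M' hM'lt hM' using hM
  let q : ℕ → ℕ := fun k => Nat.rec 0 (fun k N => M' k (P' k N)) k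
  exact ⟨fun k => P' k (q k), q, fun k => ⟨hP'lt _ _, hM'lt _ _, hP' _ _, hM' _ _⟩⟩

end Sequences

def IsSemiIrregular {E : Type*} [ENorm E] (A : E → E) (v : E) : Prop :=
  liminf (fun n => ‖A^[n] v‖ₑ) atTop = 0 ∧ limsup (fun n => ‖A^[n] v‖ₑ) atTop ≠ 0

section SemiIrregular

variable {E : Type*} [SeminormedAddGroup E] {ι : Type*} {l : Filter ι}

lemma liminf_enorm_eq_zero_iff {a : ι → E} :
    liminf (fun i => ‖a i‖ₑ) l = 0 ↔ ∀ ε > 0, ∃ᶠ i in l, ‖a i‖ < ε := by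
  refine ⟨fun h ε hε => ?_, fun h => ?_⟩
  · refine (frequently_lt_of_liminf_lt (u := fun i => ‖a i‖ₑ) (b := ENNReal.ofReal ε)
      (by isBoundedDefault) (by simpa [h] using hε)).mono fun i hi => ?_
    rwa [← ofReal_norm, ENNReal.ofReal_lt_ofReal_iff hε] at hi
  · refine le_antisymm (ENNReal.le_of_forall_pos_le_add fun ε hε _ => ?_) zero_le
    refine liminf_le_of_frequently_le' ((h ε hε).mono fun i hi => ?_)
    rw [zero_add, ← ofReal_norm, ← ENNReal.ofReal_coe_nnreal]
    exact ENNReal.ofReal_le_ofReal hi.le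

lemma limsup_enorm_ne_zero_iff {a : ι → E} :
    limsup (fun i => ‖a i‖ₑ) l ≠ 0 ↔ ∃ ε > 0, ∃ᶠ i in l, ε < ‖a i‖ := by
  refine ⟨fun h => ?_, fun ⟨ε, hε, h⟩ => ?_⟩
  · obtain ⟨b, hb0, hb⟩ := exists_between (pos_iff_ne_zero.2 h)
    refine ⟨b.toReal, ENNReal.toReal_pos hb0.ne' hb.ne_top,
      (frequently_lt_of_lt_limsup (by isBoundedDefault) hb).mono fun i hi => ?_⟩
    rw [← ofReal_norm] at hi
    exact ENNReal.toReal_lt_of_lt_ofReal hi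
  · refine ((ENNReal.ofReal_pos.2 hε).trans_le
      (le_limsup_of_frequently_le (h.mono fun i hi => ?_))).ne'
    rw [← ofReal_norm]
    exact ENNReal.ofReal_le_ofReal hi.le

lemma isSemiIrregular_iff {A : E → E} {v : E} :
    IsSemiIrregular A v ↔
      (∀ ε > 0, ∃ᶠ n in atTop, ‖A^[n] v‖ < ε) ∧ ∃ ε > 0, ∃ᶠ n in atTop, ε < ‖A^[n] v‖ :=
  and_congr liminf_enorm_eq_zero_iff limsup_enorm_ne_zero_iff

end SemiIrregular

section LiYorke

variable {E : Type*} [NormedAddCommGroup E] [NormedSpace ℝ E]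

lemma IsSemiIrregular.ne_zero {A : E →L[ℝ] E} {v : E} (hv : IsSemiIrregular A v) : v ≠ 0 := by
  rintro rfl
  simp [IsSemiIrregular, iterate_map_zero] at hv

lemma IsSemiIrregular.smul {A : E →L[ℝ] E} {v : E} (hv : IsSemiIrregular A v) {c : ℝ}
    (hc : c ≠ 0) : IsSemiIrregular A (c • v) := by
  have hnorm : ∀ n, ‖A^[n] (c • v)‖ₑ = ‖c‖ₑ * ‖A^[n] v‖ₑ ^ (1 : ℝ) := fun n => by
    rw [ENNReal.rpow_one, Function.Commute.iterate_left (f := A) (g := (c • ·)) (map_smul A c) n v,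
      enorm_smul]
  rw [IsSemiIrregular, funext hnorm, liminf_const_mul_rpow enorm_ne_top zero_le_one,
    limsup_const_mul_rpow enorm_ne_top zero_le_one, ENNReal.rpow_one, ENNReal.rpow_one, hv.1]
  exact ⟨mul_zero _, mul_ne_zero (enorm_ne_zero.2 hc) hv.2⟩

lemma dist_iterate_eq_norm (A : E →L[ℝ] E) (n : ℕ) (x y : E) :
    dist (A^[n] x) (A^[n] y) = ‖A^[n] (x - y)‖ := by
  rw [dist_eq_norm, iterate_map_sub]

theorem liYorkeChaotic_iff_exists_isSemiIrregular (A : E →L[ℝ] E) :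
    LiYorkeChaotic A ↔ ∃ v, IsSemiIrregular A v := by
  simp only [LiYorkeChaotic, dist_iterate_eq_norm]
  constructor
  · rintro ⟨S, hS, hpair⟩
    obtain ⟨x, hx, y, hy, hxy⟩ := not_subsingleton_iff.1 fun h => hS h.countable
    exact ⟨x - y, isSemiIrregular_iff.2 (hpair x hx y hy hxy)⟩
  · rintro ⟨v, hv⟩
    refine ⟨range fun r : ℝ => r • v, fun hS => Cardinal.not_countable_real ?_, ?_⟩
    · simpa using hS.preimage (smul_left_injective ℝ hv.ne_zero)
    · rintro _ ⟨r, rfl⟩ _ ⟨r', rfl⟩ hne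
      rw [← sub_smul]
      exact isSemiIrregular_iff.1 (hv.smul (sub_ne_zero.2 fun h => hne (h ▸ rfl)))

end LiYorke

section CompositionOperator

variable {X : Type*} [MeasurableSpace X] {μ : Measure X} {E : Type*} [NormedAddCommGroup E]
  {p : ℝ≥0∞} {f : X → X} {T : Lp E p μ → Lp E p μ}

lemma iterate_ae_eq_comp (hf : Measure.QuasiMeasurePreserving f μ μ)
    (hT : ∀ φ : Lp E p μ, ⇑(T φ) =ᵐ[μ] fun x => φ (f x)) (n : ℕ) (φ : Lp E p μ) :
    ⇑(T^[n] φ) =ᵐ[μ] fun x => φ (f^[n] x) := by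
  induction n generalizing φ with
  | zero => rfl
  | succ n ih =>
    rw [iterate_succ_apply, iterate_succ']
    exact (ih (T φ)).trans ((hf.iterate n).ae_eq_comp (hT φ))

lemma iterate_indicatorConstLp [IsFiniteMeasure μ] (hf : Measure.QuasiMeasurePreserving f μ μ)
    (hT : ∀ φ : Lp E p μ, ⇑(T φ) =ᵐ[μ] fun x => φ (f x)) {s : Set X} (hs : MeasurableSet s)
    (c : E) (n : ℕ) :
    T^[n] (indicatorConstLp p hs (measure_ne_top μ s) c) =
      indicatorConstLp p (hf.measurable.iterate n hs) (measure_ne_top μ _) c :=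
  Lp.ext <| (iterate_ae_eq_comp hf hT n _).trans <|
    ((hf.iterate n).ae_eq_comp indicatorConstLp_coeFn).trans indicatorConstLp_coeFn.symm

lemma isSemiIrregular_indicatorConstLp [IsFiniteMeasure μ] (hp0 : p ≠ 0) (hp : p ≠ ∞)
    (hf : Measure.QuasiMeasurePreserving f μ μ)
    (hT : ∀ φ : Lp E p μ, ⇑(T φ) =ᵐ[μ] fun x => φ (f x)) {s : Set X} (hs : MeasurableSet s)
    {c : E} (hc : c ≠ 0) (h0 : liminf (fun n => μ (f^[n] ⁻¹' s)) atTop = 0)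
    (h1 : limsup (fun n => μ (f^[n] ⁻¹' s)) atTop ≠ 0) :
    IsSemiIrregular T (indicatorConstLp p hs (measure_ne_top μ s) c) := by
  have hq : 0 < 1 / p.toReal := one_div_pos.2 (ENNReal.toReal_pos hp0 hp)
  have hnorm : ∀ n, ‖T^[n] (indicatorConstLp p hs (measure_ne_top μ s) c)‖ₑ =
      ‖c‖ₑ * μ (f^[n] ⁻¹' s) ^ (1 / p.toReal) := fun n => by
    rw [iterate_indicatorConstLp hf hT, Lp.enorm_def, eLpNorm_congr_ae indicatorConstLp_coeFn,
      eLpNorm_indicator_const (hf.measurable.iterate n hs) hp0 hp]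
  rw [IsSemiIrregular, funext hnorm, liminf_const_mul_rpow enorm_ne_top hq.le,
    limsup_const_mul_rpow enorm_ne_top hq.le, h0, ENNReal.zero_rpow_of_pos hq, mul_zero]
  exact ⟨rfl, mul_ne_zero (enorm_ne_zero.2 hc) (by simp [ENNReal.rpow_eq_zero_iff, h1])⟩

lemma exists_measure_setOf_le_enorm_ne_zero {u : X → E} (hu : ¬ u =ᵐ[μ] 0) :
    ∃ t ≠ 0, μ {x | t ≤ ‖u x‖ₑ} ≠ 0 := by
  by_contra! h
  refine hu (measure_mono_null (fun x hx => ?_)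
    (measure_iUnion_null_iff.2 fun n : ℕ => h (n : ℝ≥0∞)⁻¹ (by simp)))
  obtain ⟨n, hn⟩ := ENNReal.exists_inv_nat_lt (enorm_ne_zero.2 hx)
  exact mem_iUnion.2 ⟨n, hn.le⟩

lemma exists_liminf_measure_preimage_iterate_eq_zero (hp0 : p ≠ 0) (hp : p ≠ ∞)
    (hf : Measure.QuasiMeasurePreserving f μ μ)
    (hT : ∀ φ : Lp E p μ, ⇑(T φ) =ᵐ[μ] fun x => φ (f x)) {u : Lp E p μ} (hu0 : u ≠ 0)
    (hu : liminf (fun n => ‖T^[n] u‖ₑ) atTop = 0) :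
    ∃ B, MeasurableSet B ∧ μ B ≠ 0 ∧ liminf (fun n => μ (f^[n] ⁻¹' B)) atTop = 0 := by
  obtain ⟨t, ht, hB⟩ := exists_measure_setOf_le_enorm_ne_zero (mt Lp.eq_zero_iff_ae_eq_zero.2 hu0)
  refine ⟨_, measurableSet_le measurable_const (Lp.stronglyMeasurable u).enorm, hB, ?_⟩
  have hq : 0 < p.toReal := ENNReal.toReal_pos hp0 hp
  have hmarkov : ∀ n, μ (f^[n] ⁻¹' {x | t ≤ ‖u x‖ₑ}) ≤ t⁻¹ ^ p.toReal * ‖T^[n] u‖ₑ ^ p.toReal :=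
    fun n => calc
      μ (f^[n] ⁻¹' {x | t ≤ ‖u x‖ₑ}) = μ {x | t ≤ ‖T^[n] u x‖ₑ} :=
        measure_congr <| (iterate_ae_eq_comp hf hT n u).mono fun x hx =>
          congrArg (t ≤ ‖·‖ₑ) hx.symm
      _ ≤ _ := by
        rw [Lp.enorm_def]
        exact meas_ge_le_mul_pow_eLpNorm_enorm μ hp0 hp (Lp.aestronglyMeasurable _) ht (by simp)
  refine le_antisymm ((liminf_le_liminf (.of_forall hmarkov)).trans_eq ?_) zero_le
  rw [liminf_const_mul_rpow (ENNReal.rpow_ne_top_of_nonneg hq.le (ENNReal.inv_ne_top.2 ht)) hq.le,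
    hu, ENNReal.zero_rpow_of_pos hq, mul_zero]

end CompositionOperator

section Dynamics

variable {X : Type*} [MeasurableSpace X] {μ : Measure X} {f g : X → X} {K Kf Kg : ℝ≥0∞}

lemma measure_preimage_le_of_measurableSet (h : ∀ s, MeasurableSet s → μ (f ⁻¹' s) ≤ K * μ s)
    (s : Set X) : μ (f ⁻¹' s) ≤ K * μ s :=
  calc μ (f ⁻¹' s) ≤ μ (f ⁻¹' toMeasurable μ s) :=
        measure_mono (preimage_mono (subset_toMeasurable μ s))
    _ ≤ K * μ (toMeasurable μ s) := h _ (measurableSet_toMeasurable μ s)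
    _ = K * μ s := by rw [measure_toMeasurable]

lemma quasiMeasurePreserving_of_measure_preimage_le (hf : Measurable f)
    (hfK : ∀ s, μ (f ⁻¹' s) ≤ K * μ s) : Measure.QuasiMeasurePreserving f μ μ :=
  ⟨hf, .mk fun s hs h0 => by
    rw [Measure.map_apply hf hs]
    exact le_antisymm ((hfK s).trans_eq (by rw [h0, mul_zero])) zero_le⟩

lemma measure_preimage_iterate_le (hfK : ∀ s, μ (f ⁻¹' s) ≤ K * μ s) (n : ℕ) (s : Set X) :
    μ (f^[n] ⁻¹' s) ≤ K ^ n * μ s := by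
  induction n with
  | zero => simp
  | succ n ih =>
    rw [iterate_succ, preimage_comp, pow_succ', mul_assoc]
    exact (hfK _).trans (mul_le_mul_right ih K)

lemma measure_preimage_iterate_comm_le (hcomm : Function.Commute f g)
    (hgK : ∀ s, μ (g ⁻¹' s) ≤ K * μ s) (m n : ℕ) (s : Set X) :
    μ (f^[m] ⁻¹' (g^[n] ⁻¹' s)) ≤ K ^ n * μ (f^[m] ⁻¹' s) := by
  rw [← preimage_comp, ← (hcomm.iterate_iterate m n).comp_eq, preimage_comp]
  exact measure_preimage_iterate_le hgK n _

lemma tendsto_measure_iUnion_diff [IsFiniteMeasure μ] {W : ℕ → Set X}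
    (hW : ∀ n, MeasurableSet (W n)) (hmono : Monotone W) :
    Tendsto (fun n => μ ((⋃ m, W m) \ W n)) atTop (𝓝 0) := by
  have h := tendsto_measure_iInter_atTop (μ := μ)
    (fun n => ((MeasurableSet.iUnion hW).diff (hW n)).nullMeasurableSet)
    (fun m n hmn => sdiff_subset_sdiff_right (hmono hmn)) ⟨0, measure_ne_top μ _⟩
  rwa [← sdiff_iUnion, sdiff_self, measure_empty] at h

lemma measure_preimage_iterate_biUnion_le (hcomm : Function.Commute f g)
    (hgK : ∀ s, μ (g ⁻¹' s) ≤ K * μ s) (I : Finset ℕ) (s : Set X) (k : ℕ) :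
    μ (f^[k] ⁻¹' ⋃ n ∈ I, g^[n] ⁻¹' s) ≤ (∑ n ∈ I, K ^ n) * μ (f^[k] ⁻¹' s) := by
  simp only [preimage_iUnion₂, Finset.sum_mul]
  exact (measure_biUnion_finset_le _ _).trans
    (Finset.sum_le_sum fun n _ => measure_preimage_iterate_comm_le hcomm hgK k n s)

theorem exists_liminf_measure_preimage_iterate_eq_zero_both [IsFiniteMeasure μ]
    (hf : Measurable f) (hg : Measurable g) (hfg : RightInverse g f)
    (hcomm : Function.Commute f g) (hgK : ∀ s, μ (g ⁻¹' s) ≤ Kg * μ s) (hKg : Kg ≠ ∞)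
    {B : Set X} (hB : MeasurableSet B) (hB0 : μ B ≠ 0)
    (hBf : liminf (fun n => μ (f^[n] ⁻¹' B)) atTop = 0) :
    ∃ C, MeasurableSet C ∧ μ C ≠ 0 ∧ liminf (fun n => μ (f^[n] ⁻¹' C)) atTop = 0 ∧
      liminf (fun n => μ (g^[n] ⁻¹' C)) atTop = 0 := by
  set W : ℕ → Set X := fun L => ⋃ n ∈ Finset.range (L + 1), g^[n] ⁻¹' B
  have hW : ∀ L, MeasurableSet (W L) :=
    fun L => Finset.measurableSet_biUnion _ fun n _ => hg.iterate n hB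
  have hWmono : Monotone W := fun L L' h =>
    biUnion_subset_biUnion_left (Finset.coe_subset.2 (Finset.range_subset_range.2 (by omega)))
  obtain ⟨ε, hε0, hε⟩ := ENNReal.exists_pos_sum_of_countable' hB0 ℕ
  have hk : ∀ L, ∃ k > L, μ (f^[k] ⁻¹' W L) < ε L := fun L => by
    obtain ⟨k, hkL, hk⟩ := exists_gt_mul_lt_of_liminf_eq_zero hBf
      (ENNReal.sum_ne_top.2 fun n _ => ENNReal.pow_ne_top hKg) (hε0 L).ne' L
    exact ⟨k, hkL, (measure_preimage_iterate_biUnion_le hcomm hgK _ B k).trans_lt hk⟩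
  choose k hkL hk using hk
  set D := ⋃ L, f^[k L] ⁻¹' W L
  have hD : μ D < μ B :=
    (measure_iUnion_le _).trans_lt ((ENNReal.tsum_le_tsum fun L => (hk L).le).trans_lt hε)
  have hforward : ∀ L, g^[k L] ⁻¹' (B \ D) ⊆ (⋃ L', W L') \ W L := fun L x ⟨hxB, hxD⟩ =>
    ⟨mem_iUnion.2 ⟨k L, mem_biUnion (Finset.self_mem_range_succ _) hxB⟩,
      fun hxW => hxD (mem_iUnion.2 ⟨L, by rwa [mem_preimage, hfg.iterate (k L) x]⟩)⟩
  refine ⟨B \ D, hB.diff (.iUnion fun L => hf.iterate _ (hW L)),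
    ((tsub_pos_of_lt hD).trans_le le_measure_sdiff).ne',
    le_antisymm ((liminf_le_liminf (.of_forall fun n => measure_mono
      (preimage_mono sdiff_subset))).trans_eq hBf) zero_le, ?_⟩
  exact liminf_eq_zero_of_tendsto_comp (tendsto_atTop_mono (fun L => (hkL L).le) tendsto_id)
    (tendsto_of_tendsto_of_tendsto_of_le_of_le tendsto_const_nhds
      (tendsto_measure_iUnion_diff hW hWmono) (fun _ => zero_le)
      fun L => measure_mono (hforward L))

lemma measure_preimage_iterate_iUnion_le (hcomm : Function.Commute f g)
    (hfK : ∀ s, μ (f ⁻¹' s) ≤ K * μ s) (hgK : ∀ s, μ (g ⁻¹' s) ≤ K * μ s) (hK1 : 1 ≤ K)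
    {p : ℕ → ℕ} (hp : Monotone p) (C : Set X) (m k : ℕ) :
    μ (f^[m] ⁻¹' ⋃ j, g^[p j] ⁻¹' C) ≤ (k + 1) * K ^ p k * μ (f^[m] ⁻¹' C) +
      ∑' i, K ^ m * μ (g^[p (i + (k + 1))] ⁻¹' C) := by
  have hearly : ∀ j ∈ Finset.range (k + 1),
      μ (f^[m] ⁻¹' (g^[p j] ⁻¹' C)) ≤ K ^ p k * μ (f^[m] ⁻¹' C) :=
    fun j hj => (measure_preimage_iterate_comm_le hcomm hgK _ _ _).trans (mul_le_mul_left
      (pow_le_pow_right₀ hK1 (hp (Finset.mem_range_succ_iff.1 hj))) _)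
  calc μ (f^[m] ⁻¹' ⋃ j, g^[p j] ⁻¹' C)
      ≤ ∑' j, μ (f^[m] ⁻¹' (g^[p j] ⁻¹' C)) := by
        rw [preimage_iUnion]
        exact measure_iUnion_le _
    _ = ∑ j ∈ Finset.range (k + 1), μ (f^[m] ⁻¹' (g^[p j] ⁻¹' C)) +
        ∑' i, μ (f^[m] ⁻¹' (g^[p (i + (k + 1))] ⁻¹' C)) :=
        ENNReal.summable.sum_add_tsum_nat_add'.symm
    _ ≤ _ := by
        refine add_le_add ?_ (ENNReal.tsum_le_tsum fun i => measure_preimage_iterate_le hfK _ _)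
        refine (Finset.sum_le_card_nsmul _ _ _ hearly).trans_eq ?_
        rw [Finset.card_range, nsmul_eq_mul, mul_assoc, Nat.cast_succ]

theorem exists_liminf_measure_preimage_iterate_eq_zero_le_limsup (hg : Measurable g)
    (hgf : LeftInverse g f) (hcomm : Function.Commute f g) (hfK : ∀ s, μ (f ⁻¹' s) ≤ Kf * μ s)
    (hgK : ∀ s, μ (g ⁻¹' s) ≤ Kg * μ s) (hKf : Kf ≠ ∞) (hKg : Kg ≠ ∞) {C : Set X}
    (hC : MeasurableSet C) (hCf : liminf (fun n => μ (f^[n] ⁻¹' C)) atTop = 0)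
    (hCg : liminf (fun n => μ (g^[n] ⁻¹' C)) atTop = 0) :
    ∃ U, MeasurableSet U ∧ liminf (fun n => μ (f^[n] ⁻¹' U)) atTop = 0 ∧
      μ C ≤ limsup (fun n => μ (f^[n] ⁻¹' U)) atTop := by
  obtain ⟨K, hK, hK1, hfK, hgK⟩ : ∃ K ≠ ∞, 1 ≤ K ∧ (∀ s, μ (f ⁻¹' s) ≤ K * μ s) ∧
      ∀ s, μ (g ⁻¹' s) ≤ K * μ s :=
    ⟨max (max Kf Kg) 1, by simp [hKf, hKg], le_max_right _ _,
      fun s => (hfK s).trans (mul_le_mul_left (le_max_of_le_left (le_max_left _ _)) _),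
      fun s => (hgK s).trans (mul_le_mul_left (le_max_of_le_left (le_max_right _ _)) _)⟩
  obtain ⟨δ, hδ0, hδ⟩ := ENNReal.exists_pos_sum_of_countable' one_ne_zero ℕ
  obtain ⟨p, q, hpq⟩ := exists_interleaved
    (P := fun j N n => K ^ N * μ (g^[n] ⁻¹' C) < δ j)
    (M := fun k N n => (k + 1) * K ^ N * μ (f^[n] ⁻¹' C) < δ k)
    (fun j N => exists_gt_mul_lt_of_liminf_eq_zero hCg (ENNReal.pow_ne_top hK) (hδ0 j).ne' N)
    (fun k N => exists_gt_mul_lt_of_liminf_eq_zero hCf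
      (ENNReal.mul_ne_top (by simp) (ENNReal.pow_ne_top hK)) (hδ0 k).ne' N)
  have hp : StrictMono p :=
    strictMono_nat_of_lt_succ fun k => (hpq k).2.1.trans (hpq (k + 1)).1
  have hq : StrictMono q := strictMono_nat_of_lt_succ fun k => (hpq k).1.trans (hpq k).2.1
  have hlate : ∀ k i, K ^ q (k + 1) * μ (g^[p (i + (k + 1))] ⁻¹' C) ≤ δ (i + 1 + k) :=
    fun k i => (mul_le_mul_left (pow_le_pow_right₀ hK1 (hq.monotone (by omega))) _).trans <|
      (hpq (i + (k + 1))).2.2.1.le.trans_eq (by rw [add_right_comm, add_assoc])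
  refine ⟨⋃ j, g^[p j] ⁻¹' C, .iUnion fun j => hg.iterate _ hC, ?_, ?_⟩
  · refine liminf_eq_zero_of_tendsto_comp (hq.tendsto_atTop.comp (tendsto_add_atTop_nat 1))
      (tendsto_of_tendsto_of_tendsto_of_le_of_le tendsto_const_nhds
        (ENNReal.tendsto_sum_nat_add δ hδ.ne_top) (fun _ => zero_le) fun k => ?_)
    calc μ (f^[q (k + 1)] ⁻¹' ⋃ j, g^[p j] ⁻¹' C)
        ≤ _ := measure_preimage_iterate_iUnion_le hcomm hfK hgK hK1 hp.monotone C _ k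
      _ ≤ δ k + ∑' i, δ (i + 1 + k) :=
        add_le_add (hpq k).2.2.2.le (ENNReal.tsum_le_tsum (hlate k))
      _ = ∑' i, δ (i + k) := by
        simpa using (tsum_eq_zero_add' (f := fun i => δ (i + k)) ENNReal.summable).symm
  · refine le_limsup_of_frequently_le
      (frequently_atTop.2 fun N => ⟨p N, hp.id_le N, measure_mono fun x hx => ?_⟩)
    exact mem_iUnion.2 ⟨N, show g^[p N] (f^[p N] x) ∈ C by rwa [hgf.iterate]⟩

end Dynamics

theorem liYorkeChaotic_inv_of_liYorkeChaotic {X : Type*} [MeasurableSpace X] {μ : Measure X}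
    [IsFiniteMeasure μ] {p : ℝ≥0∞} [Fact (1 ≤ p)] (hp : p ≠ ∞) {f g : X → X}
    (hf : Measurable f) (hg : Measurable g) (hgf : LeftInverse g f) (hfg : RightInverse g f)
    {Kf Kg : ℝ≥0∞} (hfK : ∀ s, μ (f ⁻¹' s) ≤ Kf * μ s) (hgK : ∀ s, μ (g ⁻¹' s) ≤ Kg * μ s)
    (hKf : Kf ≠ ∞) (hKg : Kg ≠ ∞) {T S : Lp ℝ p μ →L[ℝ] Lp ℝ p μ}
    (hT : ∀ φ : Lp ℝ p μ, ⇑(T φ) =ᵐ[μ] fun x => φ (f x))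
    (hS : ∀ φ : Lp ℝ p μ, ⇑(S φ) =ᵐ[μ] fun x => φ (g x)) (hTc : LiYorkeChaotic T) :
    LiYorkeChaotic S := by
  have hp0 : p ≠ 0 := (one_pos.trans_le Fact.out).ne'
  have hcomm : Function.Commute f g := fun x => (hfg x).trans (hgf x).symm
  obtain ⟨u, hu⟩ := (liYorkeChaotic_iff_exists_isSemiIrregular T).1 hTc
  obtain ⟨B, hB, hB0, hBf⟩ := exists_liminf_measure_preimage_iterate_eq_zero hp0 hp
    (quasiMeasurePreserving_of_measure_preimage_le hf hfK) hT hu.ne_zero hu.1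
  obtain ⟨C, hC, hC0, hCf, hCg⟩ :=
    exists_liminf_measure_preimage_iterate_eq_zero_both hf hg hfg hcomm hgK hKg hB hB0 hBf
  obtain ⟨U, hU, hU0, hU1⟩ := exists_liminf_measure_preimage_iterate_eq_zero_le_limsup
    hf hfg hcomm.symm hgK hfK hKg hKf hC hCg hCf
  refine (liYorkeChaotic_iff_exists_isSemiIrregular S).2 ⟨_, isSemiIrregular_indicatorConstLp
    hp0 hp (quasiMeasurePreserving_of_measure_preimage_le hg hgK) hS hU one_ne_zero hU0 ?_⟩
  exact (pos_iff_ne_zero.2 hC0 |>.trans_le hU1).ne'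

theorem liYorke_iff_liYorke_inv_general
    {X : Type*} [MeasurableSpace X] (μ : Measure X)
    [IsFiniteMeasure μ]
    (p : ℝ≥0∞) [Fact (1 ≤ p)] (hp : p ≠ ∞)
    (f : X → X) (hf : Measurable f)
    (hfim : ∀ B : Set X, MeasurableSet B → MeasurableSet (f '' B))
    (c₁ c₂ : ℝ≥0∞) (hc₁ : 0 < c₁) (hc₂ : c₂ < ∞)
    (hbil : ∀ B : Set X, MeasurableSet B →
      c₁ * μ B ≤ μ (f '' B) ∧ μ (f '' B) ≤ c₂ * μ B)
    (g : X → X) (hgf : Function.LeftInverse g f) (hfg : Function.RightInverse g f)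
    (T S : Lp ℝ p μ →L[ℝ] Lp ℝ p μ)
    (hT : ∀ φ : Lp ℝ p μ, ⇑(T φ) =ᵐ[μ] fun x => φ (f x))
    (hS : ∀ φ : Lp ℝ p μ, ⇑(S φ) =ᵐ[μ] fun x => φ (g x)) :
    LiYorkeChaotic (⇑T) ↔ LiYorkeChaotic (⇑S) := by
  have himage : image f = preimage g := image_eq_preimage_of_inverse hgf hfg
  have hg : Measurable g := fun s hs => himage ▸ hfim s hs
  have hgK : ∀ s, μ (g ⁻¹' s) ≤ c₂ * μ s :=
    measure_preimage_le_of_measurableSet fun s hs => himage ▸ (hbil s hs).2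
  have hfK : ∀ s, μ (f ⁻¹' s) ≤ c₁⁻¹ * μ s := measure_preimage_le_of_measurableSet fun s hs => by
    have h := (hbil _ (hf hs)).1
    rw [himage, hfg.preimage_preimage, mul_comm] at h
    rwa [← ENNReal.div_eq_inv_mul,
      ENNReal.le_div_iff_mul_le (.inl hc₁.ne') (.inr (measure_ne_top μ s))]
  have hc₁' : c₁⁻¹ ≠ ∞ := ENNReal.inv_ne_top.2 hc₁.ne'
  exact ⟨liYorkeChaotic_inv_of_liYorkeChaotic hp hf hg hgf hfg hfK hgK hc₁' hc₂.ne hT hS,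
    liYorkeChaotic_inv_of_liYorkeChaotic hp hg hf hfg hgf hgK hfK hc₂.ne hc₁' hS hT⟩

/-- **Corollary 3.** If `μ` is finite and `f` is bijective and bi-Lipschitz with respect
to `μ`, then `T_f` is Li-Yorke chaotic if and only if so is `T_f⁻¹ = T_{f⁻¹}`. -/
theorem liYorke_iff_liYorke_inv
    {X : Type*} [MeasurableSpace X] (μ : Measure X) (hX : μ Set.univ ≠ 0)
    [IsFiniteMeasure μ]
    (p : ℝ≥0∞) [Fact (1 ≤ p)] (hp : p ≠ ∞)
    (f : X → X) (hf : Measurable f)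
    (hfim : ∀ B : Set X, MeasurableSet B → MeasurableSet (f '' B))
    (hbij : Function.Bijective f)
    (c₁ c₂ : ℝ≥0∞) (hc₁ : 0 < c₁) (hc₁₂ : c₁ < c₂) (hc₂ : c₂ < ∞)
    (hbil : ∀ B : Set X, MeasurableSet B →
      c₁ * μ B ≤ μ (f '' B) ∧ μ (f '' B) ≤ c₂ * μ B)
    (g : X → X) (hgf : Function.LeftInverse g f) (hfg : Function.RightInverse g f)
    (T S : Lp ℝ p μ →L[ℝ] Lp ℝ p μ)
    (hT : ∀ φ : Lp ℝ p μ, ⇑(T φ) =ᵐ[μ] fun x => φ (f x))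
    (hS : ∀ φ : Lp ℝ p μ, ⇑(S φ) =ᵐ[μ] fun x => φ (g x)) :
    LiYorkeChaotic (⇑T) ↔ LiYorkeChaotic (⇑S) :=
  liYorke_iff_liYorke_inv_general μ p hp f hf hfim c₁ c₂ hc₁ hc₂ hbil g hgf hfg T S hT hS
end
end

section
/- Assume that μ is a finite measure. Then the composition operator T_f on L^p(X,𝓑,μ) is not generically Li-Yorke chaotic. -/
open MeasureTheory Filter Set Topology
open scoped ENNReal

noncomputable section

/-! Since `μ (f '' B) ≥ c μ B`, preimages under `f` of null sets are null, so the constant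
function `1` is a nonzero fixed point `u` of `T_f`; by linearity
`dist (Tⁿ x) (Tⁿ (x + u)) = ‖u‖` for every `x` and `n`: the pair `x, x + u` is never proximal.
A residual set `S` in the Baire space `Lᵖ` meets its translate `S - u`, so it contains such a pair
and cannot be scrambled. -/

def Proximal {M : Type*} [PseudoMetricSpace M] (g : M → M) (x y : M) : Prop :=
  ∀ ε > 0, ∃ᶠ n in atTop, dist (g^[n] x) (g^[n] y) < ε

section FixedPoint

variable {E F : Type*} [SeminormedAddCommGroup E] [FunLike F E E] [AddMonoidHomClass F E E]
  {g : F} {u : E}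

theorem dist_iterate_add_of_isFixedPt (hu : Function.IsFixedPt g u) (x : E) (n : ℕ) :
    dist ((⇑g)^[n] x) ((⇑g)^[n] (x + u)) = ‖u‖ := by
  rw [iterate_map_add, (hu.iterate n).eq, dist_self_add_right]

theorem not_proximal_add_of_isFixedPt (hu : Function.IsFixedPt g u) (hu₀ : 0 < ‖u‖) (x : E) :
    ¬ Proximal g x (x + u) := fun hprox ↦ by
  obtain ⟨n, hn⟩ := (hprox ‖u‖ hu₀).exists
  exact hn.ne (dist_iterate_add_of_isFixedPt hu x n)

end FixedPoint

theorem exists_add_mem_of_mem_residual {G : Type*} [TopologicalSpace G] [AddGroup G]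
    [SeparatelyContinuousAdd G] [BaireSpace G] {S : Set G} (hS : S ∈ residual G) (u : G) :
    ∃ x ∈ S, x + u ∈ S := by
  have hSu : (· + u) ⁻¹' S ∈ residual G :=
    tendsto_residual_of_isOpenMap (Homeomorph.addRight u).continuous
      (Homeomorph.addRight u).isOpenMap hS
  exact (dense_of_mem_residual (inter_mem hS hSu)).nonempty

theorem exists_not_proximal_of_mem_residual {E F : Type*} [NormedAddCommGroup E] [BaireSpace E]
    [FunLike F E E] [AddMonoidHomClass F E E] {g : F} {u : E} (hu : Function.IsFixedPt g u)
    (hu₀ : u ≠ 0) {S : Set E} (hS : S ∈ residual E) :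
    ∃ x ∈ S, ∃ y ∈ S, x ≠ y ∧ ¬ Proximal g x y := by
  obtain ⟨x, hx, hxu⟩ := exists_add_mem_of_mem_residual hS u
  exact ⟨x, hx, x + u, hxu, by simpa using hu₀,
    not_proximal_add_of_isFixedPt hu (norm_pos_iff.mpr hu₀) x⟩

theorem MeasureTheory.Measure.quasiMeasurePreserving_of_le_measure_image {α β : Type*}
    [MeasurableSpace α] [MeasurableSpace β] {μ : Measure α} {ν : Measure β} {f : α → β}
    (hf : Measurable f) {c : ℝ≥0∞} (hc : c ≠ 0)
    (hcf : ∀ B : Set α, MeasurableSet B → c * μ B ≤ ν (f '' B)) :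
    Measure.QuasiMeasurePreserving f μ ν := by
  refine ⟨hf, Measure.AbsolutelyContinuous.mk fun s hs hνs ↦ ?_⟩
  have hle : c * μ (f ⁻¹' s) ≤ 0 :=
    calc c * μ (f ⁻¹' s) ≤ ν (f '' (f ⁻¹' s)) := hcf _ (hf hs)
      _ ≤ ν s := measure_mono (image_preimage_subset f s)
      _ = 0 := hνs
  rw [Measure.map_apply hf hs]
  exact (mul_eq_zero.mp (nonpos_iff_eq_zero.mp hle)).resolve_left hc

namespace MeasureTheory.Lp

variable {α E : Type*} [MeasurableSpace α] [NormedAddCommGroup E] {p : ℝ≥0∞} {μ : Measure α}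
  [IsFiniteMeasure μ]

theorem const_ne_zero [NeZero μ] {c : E} (hc : c ≠ 0) : Lp.const p μ c ≠ 0 := fun h ↦ by
  have hc₀ : Function.const α c =ᵐ[μ] 0 :=
    (Lp.coeFn_const p μ c).symm.trans (h ▸ Lp.coeFn_zero E p μ)
  have : (ae μ).NeBot := ae_neBot.mpr (NeZero.ne μ)
  obtain ⟨x, hx⟩ := hc₀.exists
  exact hc hx

theorem isFixedPt_const_of_coeFn_ae_eq_comp {f : α → α} (hf : Measure.QuasiMeasurePreserving f μ μ)
    {T : Lp E p μ → Lp E p μ} (hT : ∀ φ : Lp E p μ, ⇑(T φ) =ᵐ[μ] ⇑φ ∘ f) (c : E) :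
    Function.IsFixedPt T (Lp.const p μ c) :=
  Lp.ext <| (hT _).trans <|
    (hf.ae_eq_comp (Lp.coeFn_const p μ c)).trans (Lp.coeFn_const p μ c).symm

end MeasureTheory.Lp

theorem not_genericallyLiYorke_general
    {X : Type*} [MeasurableSpace X] (μ : Measure X) (hX : μ Set.univ ≠ 0)
    [IsFiniteMeasure μ]
    (p : ℝ≥0∞) [Fact (1 ≤ p)]
    (f : X → X) (hf : Measurable f)
    (c : ℝ≥0∞) (hc : 0 < c)
    (hcf : ∀ B : Set X, MeasurableSet B → c * μ B ≤ μ (f '' B))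
    (T : Lp ℝ p μ →L[ℝ] Lp ℝ p μ)
    (hT : ∀ φ : Lp ℝ p μ, ⇑(T φ) =ᵐ[μ] fun x => φ (f x)) :
    ¬ ∃ S : Set (Lp ℝ p μ), S ∈ residual (Lp ℝ p μ) ∧ ¬ S.Countable ∧
      ∀ x ∈ S, ∀ y ∈ S, x ≠ y →
        (∀ ε > (0 : ℝ), ∃ᶠ n in atTop, dist ((⇑T)^[n] x) ((⇑T)^[n] y) < ε) ∧
        (∃ ε > (0 : ℝ), ∃ᶠ n in atTop, ε < dist ((⇑T)^[n] x) ((⇑T)^[n] y)) := by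
  rintro ⟨S, hS, -, hscrambled⟩
  have : NeZero μ := ⟨Measure.measure_univ_ne_zero.mp hX⟩
  have hfix : Function.IsFixedPt T (Lp.const p μ (1 : ℝ)) :=
    Lp.isFixedPt_const_of_coeFn_ae_eq_comp
      (Measure.quasiMeasurePreserving_of_le_measure_image hf hc.ne' hcf) hT 1
  obtain ⟨x, hx, y, hy, hxy, hnot⟩ :=
    exists_not_proximal_of_mem_residual hfix (Lp.const_ne_zero one_ne_zero) hS
  exact hnot (hscrambled x hx y hy hxy).1

/-- **Proposition 2.** If `μ` is finite, then the composition operator `T_f` is not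
generically Li-Yorke chaotic: there is no residual (comeager) uncountable scrambled set
for `T_f`. -/
theorem not_genericallyLiYorke
    {X : Type*} [MeasurableSpace X] (μ : Measure X) (hX : μ Set.univ ≠ 0)
    [IsFiniteMeasure μ]
    (p : ℝ≥0∞) [Fact (1 ≤ p)] (hp : p ≠ ∞)
    (f : X → X) (hf : Measurable f)
    (hfim : ∀ B : Set X, MeasurableSet B → MeasurableSet (f '' B))
    (c : ℝ≥0∞) (hc : 0 < c)
    (hcf : ∀ B : Set X, MeasurableSet B → c * μ B ≤ μ (f '' B))
    (T : Lp ℝ p μ →L[ℝ] Lp ℝ p μ)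
    (hT : ∀ φ : Lp ℝ p μ, ⇑(T φ) =ᵐ[μ] fun x => φ (f x)) :
    ¬ ∃ S : Set (Lp ℝ p μ), S ∈ residual (Lp ℝ p μ) ∧ ¬ S.Countable ∧
      ∀ x ∈ S, ∀ y ∈ S, x ≠ y →
        (∀ ε > (0 : ℝ), ∃ᶠ n in atTop, dist ((⇑T)^[n] x) ((⇑T)^[n] y) < ε) ∧
        (∃ ε > (0 : ℝ), ∃ᶠ n in atTop, ε < dist ((⇑T)^[n] x) ((⇑T)^[n] y)) :=
  not_genericallyLiYorke_general μ hX p f hf c hc hcf T hT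

end
end

section
/- If there exists B ∈ 𝓑 such that μ(B) > 0 and liminf_{k→∞} μ(f^k(B)) = 0, then f admits a backward weakly wandering set W ⊆ B with μ(W) > 0. -/
open MeasureTheory Filter Set Topology
open scoped ENNReal

noncomputable section

/-- `W` is a *backward weakly wandering set* for `f` if there are positive integers
`k₁ < k₂ < ⋯` such that the sets `W, f^{-k₁}(W), f^{-k₂}(W), …` are pairwise disjoint.
(We encode this via an increasing sequence `k` with `k 0 = 0`.) -/
def BackwardWeaklyWandering {X : Type*} (f : X → X) (W : Set X) : Prop :=
  ∃ k : ℕ → ℕ, StrictMono k ∧ k 0 = 0 ∧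
    Pairwise fun i j => Disjoint (f^[k i] ⁻¹' W) (f^[k j] ⁻¹' W)

/-- `W` is a *forward weakly wandering set* for `f` if there are positive integers
`k₁ < k₂ < ⋯` such that the sets `W, f^{k₁}(W), f^{k₂}(W), …` are pairwise disjoint.
(We encode this via an increasing sequence `k` with `k 0 = 0`.) -/
def ForwardWeaklyWandering {X : Type*} (f : X → X) (W : Set X) : Prop :=
  ∃ k : ℕ → ℕ, StrictMono k ∧ k 0 = 0 ∧
    Pairwise fun i j => Disjoint (f^[k i] '' W) (f^[k j] '' W)

/-!
Choose times `0 = n₀ < n₁ < ⋯` such that `μ (f^{n_{j+1}} B)` is tiny compared with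
`c^{n_j}`. Since `f^{n_i}` shrinks measures by at most the factor `c^{n_i}`, every set
`f^{n_{j+1} - n_i} B` with `i ≤ j` is then tiny as well, so removing all of them from `B`
leaves a set `W` of positive measure. If `f^{n_i} x` and `f^{n_j} x` with `i < j` both lay in
`W`, then `f^{n_j} x = f^{n_j - n_i} (f^{n_i} x)` would lie in a removed set.
-/

theorem Nat.exists_strictMono_zero_of_frequently {P : ℕ → ℕ → ℕ → Prop}
    (h : ∀ j m, ∃ᶠ k in atTop, P j m k) :
    ∃ n : ℕ → ℕ, StrictMono n ∧ n 0 = 0 ∧ ∀ j, P j (n j) (n (j + 1)) := by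
  have hnext : ∀ j m, ∃ k, m < k ∧ P j m k := fun j m =>
    ((h j m).and_eventually (eventually_gt_atTop m)).exists.imp fun _ hk => ⟨hk.2, hk.1⟩
  choose next hlt hP using hnext
  let n : ℕ → ℕ := fun j => Nat.rec 0 (fun j m => next j m) j
  exact ⟨n, strictMono_nat_of_lt_succ fun j => hlt j (n j), rfl, fun j => hP j (n j)⟩

/-- `⋃_{i < j} f^{n_j - n_i} '' B`, indexed by `j + 1` so that `j` ranges over all of `ℕ`. -/
def iterateDiffImages {X : Type*} (f : X → X) (n : ℕ → ℕ) (B : Set X) : Set X :=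
  ⋃ j, ⋃ i ∈ Finset.range (j + 1), f^[n (j + 1) - n i] '' B

theorem backwardWeaklyWandering_diff_iterateDiffImages {X : Type*} {f : X → X} {n : ℕ → ℕ}
    (hn : StrictMono n) (hn0 : n 0 = 0) (B : Set X) :
    BackwardWeaklyWandering f (B \ iterateDiffImages f n B) := by
  refine ⟨n, hn, hn0, (pairwise_disjoint_on _).2 fun i j hij => ?_⟩
  obtain ⟨j, rfl⟩ : ∃ j', j = j' + 1 := Nat.exists_eq_succ_of_ne_zero (by omega)
  refine Set.disjoint_left.2 fun x (hxi : f^[n i] x ∈ B \ _) (hxj : f^[n (j + 1)] x ∈ B \ _) =>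
    hxj.2 ?_
  have hcomp : f^[n (j + 1) - n i] (f^[n i] x) = f^[n (j + 1)] x := by
    rw [← Function.iterate_add_apply, Nat.sub_add_cancel (hn hij).le]
  rw [← hcomp]
  exact mem_iUnion.2 ⟨j, mem_iUnion₂.2 ⟨i, Finset.mem_range.2 hij, mem_image_of_mem _ hxi.1⟩⟩

section Measure

variable {X : Type*} [MeasurableSpace X] {f : X → X}

theorem MeasurableSet.iterate_image (hfim : ∀ A : Set X, MeasurableSet A → MeasurableSet (f '' A))
    {B : Set X} (hB : MeasurableSet B) (k : ℕ) : MeasurableSet (f^[k] '' B) := by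
  induction k with
  | zero => simpa using hB
  | succ k ih => rw [Function.iterate_succ', image_comp]; exact hfim _ ih

theorem MeasurableSet.iterateDiffImages
    (hfim : ∀ A : Set X, MeasurableSet A → MeasurableSet (f '' A)) (n : ℕ → ℕ) {B : Set X}
    (hB : MeasurableSet B) : MeasurableSet (iterateDiffImages f n B) :=
  .iUnion fun _ => Finset.measurableSet_biUnion _ fun _ _ => hB.iterate_image hfim _

variable (μ : Measure X) {c : ℝ≥0∞}

theorem pow_mul_measure_le_measure_iterate_image
    (hfim : ∀ A : Set X, MeasurableSet A → MeasurableSet (f '' A))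
    (hcf : ∀ A : Set X, MeasurableSet A → c * μ A ≤ μ (f '' A))
    {B : Set X} (hB : MeasurableSet B) (k : ℕ) : c ^ k * μ B ≤ μ (f^[k] '' B) := by
  induction k with
  | zero => simp
  | succ k ih =>
    calc c ^ (k + 1) * μ B = c * (c ^ k * μ B) := by ring
      _ ≤ c * μ (f^[k] '' B) := by gcongr
      _ ≤ μ (f '' (f^[k] '' B)) := hcf _ (hB.iterate_image hfim k)
      _ = μ (f^[k + 1] '' B) := by rw [Function.iterate_succ', image_comp]

theorem measure_iterate_image_sub_lt_of_lt_pow_mul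
    (hfim : ∀ A : Set X, MeasurableSet A → MeasurableSet (f '' A))
    (hcf : ∀ A : Set X, MeasurableSet A → c * μ A ≤ μ (f '' A)) (hc0 : c ≠ 0) (hc1 : c ≤ 1)
    {B : Set X} (hB : MeasurableSet B) {m l k : ℕ} {η : ℝ≥0∞} (hml : m ≤ l) (hmk : m ≤ k)
    (hk : μ (f^[k] '' B) < c ^ l * η) : μ (f^[k - m] '' B) < η := by
  have hgrowth : c ^ m * μ (f^[k - m] '' B) ≤ μ (f^[k] '' B) := by
    simpa only [← image_comp, ← Function.iterate_add, Nat.add_sub_cancel' hmk] using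
      pow_mul_measure_le_measure_iterate_image μ hfim hcf (hB.iterate_image hfim (k - m)) m
  have hcl : c ^ l ≤ c ^ m := pow_le_pow_right_of_le_one' hc1 hml
  refine (ENNReal.mul_right_strictMono (pow_ne_zero l hc0)
    (ENNReal.pow_ne_top (hc1.trans_lt ENNReal.one_lt_top).ne)).lt_iff_lt.1 ?_
  calc c ^ l * μ (f^[k - m] '' B) ≤ c ^ m * μ (f^[k - m] '' B) := by gcongr
    _ ≤ μ (f^[k] '' B) := hgrowth
    _ < c ^ l * η := hk

theorem measure_iterateDiffImages_le {n : ℕ → ℕ} {B : Set X} {η : ℕ → ℝ≥0∞}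
    (hη : ∀ j, ∀ i ≤ j, μ (f^[n (j + 1) - n i] '' B) ≤ η j) :
    μ (iterateDiffImages f n B) ≤ ∑' j : ℕ, (j + 1 : ℝ≥0∞) * η j := by
  refine (measure_iUnion_le _).trans (ENNReal.tsum_le_tsum fun j => ?_)
  calc μ (⋃ i ∈ Finset.range (j + 1), f^[n (j + 1) - n i] '' B)
      ≤ ∑ i ∈ Finset.range (j + 1), μ (f^[n (j + 1) - n i] '' B) :=
        measure_biUnion_finset_le _ _
    _ ≤ (Finset.range (j + 1)).card • η j :=
        Finset.sum_le_card_nsmul _ _ _ fun i hi =>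
          hη j i (Nat.lt_succ_iff.1 (Finset.mem_range.1 hi))
    _ = (j + 1 : ℝ≥0∞) * η j := by simp [nsmul_eq_mul]

end Measure

theorem exists_backwardWeaklyWandering_general
    {X : Type*} [MeasurableSpace X] (μ : Measure X)
    (f : X → X)
    (hfim : ∀ B : Set X, MeasurableSet B → MeasurableSet (f '' B))
    (c : ℝ≥0∞) (hc : 0 < c)
    (hcf : ∀ B : Set X, MeasurableSet B → c * μ B ≤ μ (f '' B))
    (B : Set X) (hB : MeasurableSet B) (hB0 : 0 < μ B)
    (h : atTop.liminf (fun k : ℕ => μ (f^[k] '' B)) = 0) :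
    ∃ W : Set X, W ⊆ B ∧ MeasurableSet W ∧ 0 < μ W ∧
      BackwardWeaklyWandering f W := by
  -- capping at `1` makes `c' ^ m` antitone in `m`
  set c' := min c 1
  have hc'0 : c' ≠ 0 := (lt_min hc one_pos).ne'
  have hcf' : ∀ A : Set X, MeasurableSet A → c' * μ A ≤ μ (f '' A) := fun A hA =>
    (mul_le_mul_left (min_le_left c 1) _).trans (hcf A hA)
  obtain ⟨η, hη0, hηB⟩ := ENNReal.exists_pos_tsum_mul_lt_of_countable hB0.ne'
    (fun j : ℕ => (j + 1 : ℝ≥0∞)) fun j => by simp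
  obtain ⟨n, hn, hn0, hsmall⟩ := Nat.exists_strictMono_zero_of_frequently
    (P := fun j m k => μ (f^[k] '' B) < c' ^ m * η j) fun j m =>
      frequently_lt_of_liminf_lt (by isBoundedDefault)
        (h ▸ ENNReal.mul_pos (pow_ne_zero m hc'0) (ENNReal.coe_ne_zero.2 (hη0 j).ne'))
  have hR : μ (iterateDiffImages f n B) < μ B :=
    (measure_iterateDiffImages_le μ fun j i hij =>
      (measure_iterate_image_sub_lt_of_lt_pow_mul μ hfim hcf' hc'0 (min_le_right c 1) hB
        (hn.monotone hij) (hn.monotone (hij.trans j.le_succ)) (hsmall j)).le).trans_lt hηB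
  exact ⟨B \ iterateDiffImages f n B, sdiff_subset, hB.diff (hB.iterateDiffImages hfim n),
    (tsub_pos_of_lt hR).trans_le (le_measure_sdiff ..),
    backwardWeaklyWandering_diff_iterateDiffImages hn hn0 B⟩

/-- **Lemma 1.** If there exists a measurable set `B` with `μ(B) > 0` and
`liminf_{k → ∞} μ(f^k(B)) = 0`, then `f` admits a backward weakly wandering set
`W ⊆ B` of positive measure. -/
theorem exists_backwardWeaklyWandering
    {X : Type*} [MeasurableSpace X] (μ : Measure X) (hX : μ Set.univ ≠ 0)
    (f : X → X) (hf : Measurable f)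
    (hfim : ∀ B : Set X, MeasurableSet B → MeasurableSet (f '' B))
    (c : ℝ≥0∞) (hc : 0 < c)
    (hcf : ∀ B : Set X, MeasurableSet B → c * μ B ≤ μ (f '' B))
    (B : Set X) (hB : MeasurableSet B) (hB0 : 0 < μ B)
    (h : atTop.liminf (fun k : ℕ => μ (f^[k] '' B)) = 0) :
    ∃ W : Set X, W ⊆ B ∧ MeasurableSet W ∧ 0 < μ W ∧
      BackwardWeaklyWandering f W :=
  exists_backwardWeaklyWandering_general μ f hfim c hc hcf B hB hB0 h
end
end

section
/- Assume that f is injective. If there exists B ∈ 𝓑 such that 0 < μ(B) < ∞ and liminf_{k→∞} μ(f^{-k}(B)) = 0, then f admits a forward weakly wandering set W ⊆ B with μ(W) > 0. -/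
/-!
Choose times `0 = k₀ < k₁ < ⋯` so that the return sets `f^{-(k_j - k_i)}(B)`, `i < j`, have total
measure below `μ B`, and let `W = B ∖ ⋃_{i<j} f^{-(k_j - k_i)}(B)`, a set of positive measure.
If `f^{k_i}(a) = f^{k_j}(b)` with `a, b ∈ W` and `i < j`, injectivity gives `a = f^{k_j - k_i}(b)`,
so `b` lies in a removed return set. Such times exist because `μ(f^{-m}(B))` is frequently as
small as we like, while pulling back by `f^a` multiplies measures by at most `c^{-a}`: the gap
`k_{j+1} - k_j` is chosen after `k_j` is known, small enough to absorb `c^{-k_j}`.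
-/

open MeasureTheory Filter Set Topology
open scoped ENNReal

noncomputable section

lemma forwardWeaklyWandering_of_disjoint_preimage {X : Type*} {f : X → X}
    (hinj : Function.Injective f) {W : Set X} {k : ℕ → ℕ} (hk : StrictMono k) (hk0 : k 0 = 0)
    (hW : ∀ i j, i < j → Disjoint W (f^[k j - k i] ⁻¹' W)) :
    ForwardWeaklyWandering f W := by
  have hlt : ∀ i j, i < j → Disjoint (f^[k i] '' W) (f^[k j] '' W) := by
    intro i j hij
    rw [Set.disjoint_left]
    rintro _ ⟨a, ha, rfl⟩ ⟨b, hb, hba⟩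
    have hsplit : f^[k j] b = f^[k i] (f^[k j - k i] b) := by
      rw [← Function.iterate_add_apply, Nat.add_sub_cancel' (hk hij).le]
    have hab : f^[k j - k i] b = a := hinj.iterate _ (hsplit ▸ hba)
    exact Set.disjoint_left.mp (hW i j hij) hb (show f^[k j - k i] b ∈ W from hab ▸ ha)
  refine ⟨k, hk, hk0, fun i j hij => ?_⟩
  rcases hij.lt_or_gt with hij | hij
  exacts [hlt i j hij, (hlt j i hij).symm]

lemma exists_strictMono_zero_of_forall_exists_pos {P : ℕ → ℕ → ℕ → Prop}
    (h : ∀ j n, ∃ m, 0 < m ∧ P j n m) :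
    ∃ k : ℕ → ℕ, StrictMono k ∧ k 0 = 0 ∧ ∀ j, P j (k j) (k (j + 1) - k j) := by
  choose m hm hP using h
  let k : ℕ → ℕ := fun j => Nat.rec 0 (fun j kj => kj + m j kj) j
  have hk : ∀ j, k (j + 1) = k j + m j (k j) := fun _ => rfl
  refine ⟨k, strictMono_nat_of_lt_succ fun j => ?_, rfl, fun j => ?_⟩
  · rw [hk]; exact Nat.lt_add_of_pos_right (hm _ _)
  · rw [hk, Nat.add_sub_cancel_left]; exact hP _ _

section Preimage

variable {X : Type*} [MeasurableSpace X] {μ : Measure X} {f : X → X} {c : ℝ≥0∞}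

lemma mul_measure_preimage_iterate_le (hf : Measurable f)
    (hcf : ∀ B : Set X, MeasurableSet B → c * μ B ≤ μ (f '' B))
    {A : Set X} (hA : MeasurableSet A) (n : ℕ) : c ^ n * μ (f^[n] ⁻¹' A) ≤ μ A := by
  induction n generalizing A with
  | zero => simp
  | succ n ih =>
    calc c ^ (n + 1) * μ (f^[n + 1] ⁻¹' A) = c ^ n * (c * μ (f ⁻¹' (f^[n] ⁻¹' A))) := by
          rw [Function.iterate_succ, Set.preimage_comp, pow_succ, mul_assoc]
      _ ≤ c ^ n * μ (f^[n] ⁻¹' A) := by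
          gcongr
          exact (hcf _ (hf (hf.iterate n hA))).trans (measure_mono (image_preimage_subset _ _))
      _ ≤ μ A := ih hA

lemma measure_preimage_iterate_add_lt (hf : Measurable f)
    (hcf : ∀ B : Set X, MeasurableSet B → c * μ B ≤ μ (f '' B)) (hc0 : c ≠ 0) (hc1 : c ≤ 1)
    {A : Set X} (hA : MeasurableSet A) {a m n : ℕ} (han : a ≤ n) {δ : ℝ≥0∞}
    (hm : μ (f^[m] ⁻¹' A) < c ^ n * δ) : μ (f^[m + a] ⁻¹' A) < δ := by
  have hcn0 : c ^ n ≠ 0 := pow_ne_zero _ hc0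
  have hcntop : c ^ n ≠ ∞ := ENNReal.pow_ne_top (ne_top_of_le_ne_top ENNReal.one_ne_top hc1)
  rw [← ENNReal.mul_lt_mul_iff_right hcn0 hcntop]
  calc c ^ n * μ (f^[m + a] ⁻¹' A) ≤ c ^ a * μ (f^[a] ⁻¹' (f^[m] ⁻¹' A)) := by
        rw [Function.iterate_add, Set.preimage_comp]
        exact mul_le_mul_left (pow_le_pow_of_le_one zero_le hc1 han) _
    _ ≤ μ (f^[m] ⁻¹' A) := mul_measure_preimage_iterate_le hf hcf (hf.iterate m hA) a
    _ < c ^ n * δ := hm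

lemma exists_strictMono_measure_iUnion_preimage_iterate_lt (hf : Measurable f)
    (hcf : ∀ B : Set X, MeasurableSet B → c * μ B ≤ μ (f '' B)) (hc0 : c ≠ 0) (hc1 : c ≤ 1)
    {B : Set X} (hB : MeasurableSet B) (hB0 : μ B ≠ 0)
    (h : atTop.liminf (fun k : ℕ => μ (f^[k] ⁻¹' B)) = 0) :
    ∃ k : ℕ → ℕ, StrictMono k ∧ k 0 = 0 ∧
      μ (⋃ j, ⋃ i ∈ Finset.range (j + 1), f^[k (j + 1) - k i] ⁻¹' B) < μ B := by
  -- step `j` adds the `j + 1` sets `f^{-(k_{j+1} - k_i)}(B)`, `i ≤ j`, each of measure `< δ j`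
  obtain ⟨δ, hδ0, hδsum⟩ := ENNReal.exists_pos_tsum_mul_lt_of_countable hB0
    (fun j : ℕ => (j + 1 : ℝ≥0∞)) fun j => by simp
  have hreturn : ∀ j n, ∃ m, 0 < m ∧ μ (f^[m] ⁻¹' B) < c ^ n * δ j := fun j n =>
    frequently_atTop.mp (frequently_lt_of_liminf_lt (by isBoundedDefault)
      (h ▸ ENNReal.mul_pos (pow_ne_zero _ hc0) (by simpa using (hδ0 j).ne'))) 1
  obtain ⟨k, hk, hk0, hkstep⟩ := exists_strictMono_zero_of_forall_exists_pos hreturn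
  have hpair : ∀ j, ∀ i ≤ j, μ (f^[k (j + 1) - k i] ⁻¹' B) < δ j := by
    intro j i hij
    have hki : k i ≤ k j := hk.monotone hij
    have hkj : k j ≤ k (j + 1) := hk.monotone j.le_succ
    convert measure_preimage_iterate_add_lt hf hcf hc0 hc1 hB (Nat.sub_le (k j) (k i))
      (hkstep j) using 4
    omega
  refine ⟨k, hk, hk0, ?_⟩
  calc _ ≤ ∑' j, ∑ i ∈ Finset.range (j + 1), μ (f^[k (j + 1) - k i] ⁻¹' B) :=
        (measure_iUnion_le _).trans (ENNReal.tsum_le_tsum fun j => measure_biUnion_finset_le _ _)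
    _ ≤ ∑' j : ℕ, (j + 1 : ℝ≥0∞) * δ j := ENNReal.tsum_le_tsum fun j => by
        simpa using Finset.sum_le_sum fun i hi =>
          (hpair j i (Nat.lt_succ_iff.mp (Finset.mem_range.mp hi))).le
    _ < μ B := hδsum

end Preimage

lemma exists_forwardWeaklyWandering_subset {X : Type*} [MeasurableSpace X] {μ : Measure X}
    {f : X → X} (hinj : Function.Injective f) {B U : Set X} (hB : MeasurableSet B)
    (hU : MeasurableSet U) (hUB : μ U < μ B) {k : ℕ → ℕ} (hk : StrictMono k) (hk0 : k 0 = 0)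
    (hBU : ∀ i j, i < j → f^[k j - k i] ⁻¹' B ⊆ U) :
    ∃ W ⊆ B, MeasurableSet W ∧ 0 < μ W ∧ ForwardWeaklyWandering f W := by
  refine ⟨B \ U, sdiff_subset, hB.diff hU, ?_, ?_⟩
  · exact (tsub_pos_of_lt hUB).trans_le le_measure_sdiff
  · refine forwardWeaklyWandering_of_disjoint_preimage hinj hk hk0 fun i j hij => ?_
    refine Set.disjoint_left.mpr fun x hx hx' => hx.2 (hBU i j hij ?_)
    exact preimage_mono sdiff_subset hx'

theorem exists_forwardWeaklyWandering_general
    {X : Type*} [MeasurableSpace X] (μ : Measure X)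
    (f : X → X) (hf : Measurable f)
    (c : ℝ≥0∞) (hc : 0 < c)
    (hcf : ∀ B : Set X, MeasurableSet B → c * μ B ≤ μ (f '' B))
    (hinj : Function.Injective f)
    (B : Set X) (hB : MeasurableSet B) (hB0 : 0 < μ B)
    (h : atTop.liminf (fun k : ℕ => μ (f^[k] ⁻¹' B)) = 0) :
    ∃ W : Set X, W ⊆ B ∧ MeasurableSet W ∧ 0 < μ W ∧
      ForwardWeaklyWandering f W := by
  have hc'0 : min c 1 ≠ 0 := (lt_min hc zero_lt_one).ne'
  have hcf' : ∀ A : Set X, MeasurableSet A → min c 1 * μ A ≤ μ (f '' A) := fun A hA =>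
    (mul_le_mul_left (min_le_left c 1) _).trans (hcf A hA)
  obtain ⟨k, hk, hk0, hUB⟩ := exists_strictMono_measure_iUnion_preimage_iterate_lt hf hcf' hc'0
    (min_le_right c 1) hB hB0.ne' h
  refine exists_forwardWeaklyWandering_subset hinj hB (by measurability) hUB hk hk0
    fun i j hij => ?_
  obtain ⟨j, rfl⟩ : ∃ j', j = j' + 1 := ⟨j - 1, by omega⟩
  exact subset_iUnion_of_subset j (subset_iUnion₂_of_subset i (Finset.mem_range.mpr hij) le_rfl)

/-- **Lemma 2.** Assume `f` injective. If there exists a measurable set `B` with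
`0 < μ(B) < ∞` and `liminf_{k → ∞} μ(f^{-k}(B)) = 0`, then `f` admits a forward weakly
wandering set `W ⊆ B` of positive measure. -/
theorem exists_forwardWeaklyWandering
    {X : Type*} [MeasurableSpace X] (μ : Measure X) (hX : μ Set.univ ≠ 0)
    (f : X → X) (hf : Measurable f)
    (hfim : ∀ B : Set X, MeasurableSet B → MeasurableSet (f '' B))
    (c : ℝ≥0∞) (hc : 0 < c)
    (hcf : ∀ B : Set X, MeasurableSet B → c * μ B ≤ μ (f '' B))
    (hinj : Function.Injective f)
    (B : Set X) (hB : MeasurableSet B) (hB0 : 0 < μ B) (hBfin : μ B < ∞)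
    (h : atTop.liminf (fun k : ℕ => μ (f^[k] ⁻¹' B)) = 0) :
    ∃ W : Set X, W ⊆ B ∧ MeasurableSet W ∧ 0 < μ W ∧
      ForwardWeaklyWandering f W :=
  exists_forwardWeaklyWandering_general μ f hf c hc hcf hinj B hB hB0 h
end
end

section
/- For every 1 ≤ p < ∞ there exist a σ-finite measure space (X,𝓑,μ) and a bijective bimeasurable map f : X → X that is bi-Lipschitz with respect to μ (i.e., c₁·μ(B) ≤ μ(f(B)) ≤ c₂·μ(B) for all B ∈ 𝓑 and some constants c₂ > c₁ > 0) such that the composition operator T_f on L^p(X,𝓑,μ) is Li-Yorke chaotic, and yet for every measurable set A with 0 < μ(A) < ∞ one has sup{ μ(f^k(A)) / μ(f^l(A)) : k,l ∈ ℤ, k < l } < ∞ (so no measurable set satisfies condition (ii) of the sufficient criterion for Li-Yorke chaos for injective f). -/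
open MeasureTheory Filter Set Topology
open scoped ENNReal

noncomputable section

/-- For `k : ℤ`, `iterSet f k B` is the set `f^k(B)`: the image of `B` under the `k`-th
iterate of `f` when `k ≥ 0`, and the preimage of `B` under the `|k|`-th iterate of `f`
when `k < 0`. -/
def iterSet {X : Type*} (f : X → X) (k : ℤ) (B : Set X) : Set X :=
  if 0 ≤ k then f^[k.toNat] '' B else f^[(-k).toNat] ⁻¹' B

/-!
The example lives on `ℕ × ℤ` with the counting measure weighted by `2 ^ exponent i m`, and `f`
shifts every row `{i} × ℤ` one step to the right. With `aᵢ = 3 ^ (i + 1)`, the exponent along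
row `i` is `|m|` for `m ≥ -aᵢ` and `m + 2aᵢ` below that. It changes by at most one per step, so
`f` is bi-Lipschitz with constants `1/2` and `2`.

Ratios: since `m ≤ exponent i m ≤ m + 2aᵢ`, the measure of `fᵏ(A)` lies between `2ᵏ` times two
masses of `A`, computed with the weights `2 ^ m` and `2 ^ (m + 2aᵢ)`. The upper one is finite
because a set of finite measure contains only finitely many points of weight `≥ 1`, and at every
other point the weight is exactly `2 ^ (m + 2aᵢ)`.

Chaos: for `u = ∑ᵢ 2^(-aᵢ/p) 𝟙_{(i,0)}`, `‖Tⁿu‖ₚᵖ = ∑ᵢ 2^(exponent i (-n) - aᵢ)`. This is at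
least `1` at `n = aⱼ`, the peak of row `j`, and at most `2^(-j)` at `n = 2aⱼ`, where row `j` is
back in its valley and, because `aᵢ₊₁ = 3aᵢ`, every other row is far from its peak. Hence `u` is
semi-irregular, and the line `ℝ u` is a scrambled set.
-/

theorem liYorkeChaotic_of_semiIrregular {E : Type*} [NormedAddCommGroup E] [NormedSpace ℝ E]
    (T : E →L[ℝ] E) (u : E) (hsmall : ∀ ε > 0, ∃ᶠ n in atTop, ‖T^[n] u‖ < ε)
    (hlarge : ∃ ε > 0, ∃ᶠ n in atTop, ε < ‖T^[n] u‖) : LiYorkeChaotic T := by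
  obtain ⟨δ, hδ, hfreq⟩ := hlarge
  have hu : u ≠ 0 := by
    rintro rfl
    obtain ⟨n, hn⟩ := hfreq.exists
    rw [← FunLike.coe_pow_eq_iterate, map_zero, norm_zero] at hn
    exact hn.not_gt hδ
  have hdist (s t : ℝ) (n : ℕ) :
      dist (T^[n] (s • u)) (T^[n] (t • u)) = |s - t| * ‖T^[n] u‖ := by
    simp only [dist_eq_norm, ← FunLike.coe_pow_eq_iterate, ← sub_smul, map_smul,
      norm_smul, Real.norm_eq_abs]
  refine ⟨range (fun t : ℝ => t • u), fun h => Cardinal.not_countable_real ?_, ?_⟩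
  · simpa using h.preimage (smul_left_injective ℝ hu)
  rintro _ ⟨s, rfl⟩ _ ⟨t, rfl⟩ hst
  have hst : 0 < |s - t| := abs_pos.2 (sub_ne_zero.2 fun h => hst (h ▸ rfl))
  simp only [hdist]
  refine ⟨fun ε hε => (hsmall (ε / |s - t|) (div_pos hε hst)).mono fun n hn => ?_,
    ⟨|s - t| * δ, mul_pos hst hδ, hfreq.mono fun n hn => mul_lt_mul_of_pos_left hn hst⟩⟩
  rwa [lt_div_iff₀' hst] at hn

section CompositionOperator

variable {α E : Type*} [MeasurableSpace α] {μ : Measure α} [NormedAddCommGroup E]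
  [NormedSpace ℝ E] {p : ℝ≥0∞} [Fact (1 ≤ p)] {f : α → α} {C : ℝ≥0∞}

theorem map_le_smul_of_le_measure_image (hf : Measurable f) (hsurj : f.Surjective) {c : ℝ≥0∞}
    (hc0 : c ≠ 0) (hc : c ≠ ∞) (h : ∀ B, MeasurableSet B → c * μ B ≤ μ (f '' B)) :
    μ.map f ≤ c⁻¹ • μ := by
  refine Measure.le_iff.2 fun B hB => ?_
  rw [Measure.map_apply hf hB, Measure.smul_apply, smul_eq_mul, mul_comm, ← div_eq_mul_inv,
    ENNReal.le_div_iff_mul_le (.inl hc0) (.inl hc), mul_comm]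
  simpa [image_preimage_eq B hsurj] using h _ (hf hB)

variable (p) in
def compLp (hf : Measurable f) (hC : μ.map f ≤ C • μ) (hC_top : C ≠ ∞) :
    Lp E p μ →L[ℝ] Lp E p μ :=
  (Lp.compMeasurePreservingₗᵢ ℝ f (hf.measurePreserving μ)).toContinuousLinearMap.comp
    (Lp.LpToLpOfMeasureLeSMul hC_top hC)

theorem compLp_ae_eq (hf : Measurable f) (hC : μ.map f ≤ C • μ) (hC_top : C ≠ ∞)
    (g : Lp E p μ) : compLp p hf hC hC_top g =ᵐ[μ] g ∘ f :=
  (Lp.coeFn_compMeasurePreserving _ _).trans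
    (ae_eq_comp hf.aemeasurable (Lp.coeFn_LpToLpOfMeasureLeSMul hC_top hC g))

theorem compLp_iterate_toLp_ae_eq (hf : Measurable f) (hC : μ.map f ≤ C • μ) (hC_top : C ≠ ∞)
    {g : α → E} (hg : MemLp g p μ) (n : ℕ) :
    ⇑((compLp p hf hC hC_top)^[n] (hg.toLp g)) =ᵐ[μ] g ∘ f^[n] := by
  induction n with
  | zero => exact hg.coeFn_toLp
  | succ n ih =>
    rw [Function.iterate_succ_apply', Function.iterate_succ, ← Function.comp_assoc]
    exact (compLp_ae_eq hf hC hC_top _).trans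
      ((Measure.QuasiMeasurePreserving.mk hf
        (Measure.absolutelyContinuous_of_le_smul hC)).ae_eq_comp ih)

end CompositionOperator

theorem iSup_div_lt_top_of_zpow_bounds {ν : ℤ → ℝ≥0∞} {r lo hi : ℝ≥0∞} (hr : 1 ≤ r)
    (hr_top : r ≠ ∞) (hlo : lo ≠ 0) (hhi : hi ≠ ∞) (hν_ge : ∀ k, r ^ k * lo ≤ ν k)
    (hν_le : ∀ k, ν k ≤ r ^ k * hi) : (⨆ (k : ℤ) (l : ℤ) (_ : k < l), ν k / ν l) < ∞ := by
  have hr0 : r ≠ 0 := (zero_lt_one.trans_le hr).ne'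
  refine lt_of_le_of_lt (iSup_le fun k => iSup_le fun l => iSup_le fun hkl => ?_)
    (ENNReal.div_lt_top hhi hlo)
  calc ν k / ν l ≤ r ^ l * hi / (r ^ l * lo) :=
        ENNReal.div_le_div ((hν_le k).trans (by gcongr)) (hν_ge l)
    _ = hi / lo :=
        ENNReal.mul_div_mul_left _ _ (ENNReal.zpow_pos hr0 hr_top l).ne'
          (ENNReal.zpow_ne_top hr0 hr_top l)

theorem iterSet_eq_image_zpow {X : Type*} (e : Equiv.Perm X) (k : ℤ) (B : Set X) :
    iterSet e k B = ⇑(e ^ k) '' B := by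
  unfold iterSet
  split_ifs with hk
  · rw [← Equiv.Perm.coe_pow, ← zpow_natCast, Int.toNat_of_nonneg hk]
  · rw [← Equiv.Perm.coe_pow, Equiv.image_eq_preimage_symm, ← Equiv.Perm.inv_def, ← zpow_natCast,
      ← zpow_neg, Int.toNat_of_nonneg (by omega)]

section WeightedCount

variable {X : Type*} [MeasurableSpace X] [DiscreteMeasurableSpace X]

theorem withDensity_count_apply (w : X → ℝ≥0∞) (s : Set X) :
    Measure.count.withDensity w s = ∑' x, s.indicator w x := by
  rw [withDensity_apply _ MeasurableSet.of_discrete,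
    ← lintegral_indicator MeasurableSet.of_discrete, lintegral_count]

theorem withDensity_count_image_equiv (w : X → ℝ≥0∞) (e : X ≃ X) (s : Set X) :
    Measure.count.withDensity w (e '' s) = Measure.count.withDensity (w ∘ e) s := by
  rw [withDensity_count_apply, withDensity_count_apply, ← e.tsum_eq]
  simp only [indicator_image e.injective]

theorem lintegral_withDensity_count (w g : X → ℝ≥0∞) :
    ∫⁻ x, g x ∂Measure.count.withDensity w = ∑' x, w x * g x := by
  rw [lintegral_withDensity_eq_lintegral_mul _ Measurable.of_discrete Measurable.of_discrete,
    lintegral_count]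
  rfl

end WeightedCount

theorem ENNReal.tsum_ne_top_of_le_of_lt_one {ι : Type*} {a b : ι → ℝ≥0∞} (ha : ∑' i, a i ≠ ∞)
    (hb : ∀ i, b i ≠ ∞) (hba : ∀ i, a i < 1 → b i ≤ a i) : ∑' i, b i ≠ ∞ := by
  set S := {i | 1 ≤ a i}
  have hS : S.Finite := ENNReal.finite_const_le_of_tsum_ne_top ha one_ne_zero
  have hle (i : ι) : b i ≤ a i + S.indicator b i := by
    by_cases hi : i ∈ S
    · simp [indicator_of_mem hi]
    · simpa [indicator_of_notMem hi] using hba i (not_le.1 hi)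
  refine ne_top_of_le_ne_top ?_ (ENNReal.tsum_le_tsum hle)
  have := hS.fintype
  rw [ENNReal.tsum_add, ← tsum_subtype S b, tsum_fintype fun i : S => b i]
  exact ENNReal.add_ne_top.2 ⟨ha, ENNReal.sum_ne_top.2 fun i _ => hb i⟩

namespace ShiftExample

def peak (i : ℕ) : ℕ := 3 ^ (i + 1)

theorem peak_strictMono : StrictMono peak :=
  fun _ _ h => Nat.pow_lt_pow_right (by norm_num) (by omega)

theorem peak_succ (i : ℕ) : peak (i + 1) = 3 * peak i := by
  simp only [peak, pow_succ 3 (i + 1)]; ring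

theorem two_mul_add_two_le_peak (i : ℕ) : 2 * i + 2 ≤ peak i := by
  induction i with
  | zero => simp [peak]
  | succ i ih => rw [peak_succ]; omega

def exponent (i : ℕ) (m : ℤ) : ℤ :=
  if -(peak i : ℤ) ≤ m then (if m ≤ 0 then -m else m) else m + 2 * peak i

theorem exponent_mem_Icc (i : ℕ) (m : ℤ) : exponent i m ∈ Icc m (m + 2 * peak i) := by
  unfold exponent; constructor <;> split_ifs <;> omega

theorem exponent_succ_mem_Icc (i : ℕ) (m : ℤ) :
    exponent i (m + 1) ∈ Icc (exponent i m - 1) (exponent i m + 1) := by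
  have := two_mul_add_two_le_peak i
  unfold exponent; constructor <;> split_ifs <;> omega

theorem exponent_neg_peak (i : ℕ) : exponent i (-peak i) = peak i := by
  simp [exponent]

theorem exponent_of_neg {i : ℕ} {m : ℤ} (h : exponent i m < 0) :
    exponent i m = m + 2 * peak i := by
  unfold exponent at *; split_ifs at * <;> omega

theorem exponent_neg_two_mul_peak_sub_peak_le (i j : ℕ) :
    exponent i (-(2 * peak j)) - peak i ≤ -(1 + i + j) := by
  have hi := two_mul_add_two_le_peak i
  have hj := two_mul_add_two_le_peak j
  rcases lt_trichotomy i j with h | rfl | h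
  · have := peak_strictMono h
    unfold exponent; split_ifs <;> omega
  · unfold exponent; split_ifs <;> omega
  · obtain ⟨k, rfl⟩ := Nat.exists_eq_add_of_lt h
    have h1 := peak_succ (j + k)
    have h2 := peak_strictMono.monotone (show j ≤ j + k by omega)
    have h3 := two_mul_add_two_le_peak (j + k)
    unfold exponent; split_ifs <;> omega

def weight (x : ℕ × ℤ) : ℝ≥0∞ := 2 ^ exponent x.1 x.2

abbrev weightedMeasure : Measure (ℕ × ℤ) := Measure.count.withDensity weight

def shift : Equiv.Perm (ℕ × ℤ) := Equiv.prodCongr (Equiv.refl ℕ) (Equiv.addRight 1)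

theorem shift_zpow_apply (k : ℤ) (x : ℕ × ℤ) : (shift ^ k) x = (x.1, x.2 + k) := by
  induction k using Int.induction_on generalizing x with
  | zero => simp
  | succ k ih => rw [zpow_add_one, Equiv.Perm.mul_apply, ih]; simp [shift]; ring
  | pred k ih =>
    rw [zpow_sub_one, Equiv.Perm.mul_apply, ih]
    simp [shift, Equiv.Perm.inv_def]; ring

theorem shift_iterate_apply (n : ℕ) (x : ℕ × ℤ) : shift^[n] x = (x.1, x.2 + n) := by
  rw [← Equiv.Perm.coe_pow, ← zpow_natCast, shift_zpow_apply]

theorem weight_ne_top (x : ℕ × ℤ) : weight x ≠ ∞ :=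
  ENNReal.zpow_ne_top two_ne_zero ENNReal.ofNat_ne_top _

theorem weight_shift_mem_Icc (x : ℕ × ℤ) :
    weight (shift x) ∈ Icc (2⁻¹ * weight x) (2 * weight x) := by
  obtain ⟨h₁, h₂⟩ := exponent_succ_mem_Icc x.1 x.2
  have two_zpow_add := ENNReal.zpow_add (x := 2) two_ne_zero ENNReal.ofNat_ne_top
  refine ⟨?_, ?_⟩
  · calc 2⁻¹ * weight x = 2 ^ (exponent x.1 x.2 - 1) := by
          rw [weight, sub_eq_add_neg, two_zpow_add, zpow_neg_one, mul_comm]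
      _ ≤ weight (shift x) := ENNReal.zpow_le_of_le one_le_two h₁
  · calc weight (shift x) ≤ 2 ^ (exponent x.1 x.2 + 1) := ENNReal.zpow_le_of_le one_le_two h₂
      _ = 2 * weight x := by rw [two_zpow_add, zpow_one, mul_comm, weight]

theorem weightedMeasure_image_shift_mem_Icc (B : Set (ℕ × ℤ)) :
    weightedMeasure (shift '' B) ∈ Icc (2⁻¹ * weightedMeasure B) (2 * weightedMeasure B) := by
  have hsmul (c : ℝ≥0∞) : c * weightedMeasure B = Measure.count.withDensity (c • weight) B := by
    rw [withDensity_smul _ Measurable.of_discrete]; rfl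
  rw [withDensity_count_image_equiv, hsmul, hsmul]
  exact ⟨withDensity_mono (ae_of_all _ fun x => (weight_shift_mem_Icc x).1) B,
    withDensity_mono (ae_of_all _ fun x => (weight_shift_mem_Icc x).2) B⟩

def envelope (c : ℕ → ℤ) (x : ℕ × ℤ) : ℝ≥0∞ := 2 ^ (x.2 + c x.1)

theorem envelope_comp_shift_zpow (c : ℕ → ℤ) (k : ℤ) :
    envelope c ∘ ⇑(shift ^ k) = (2 : ℝ≥0∞) ^ k • envelope c := by
  ext x
  simp only [envelope, Function.comp_apply, shift_zpow_apply, Pi.smul_apply, smul_eq_mul]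
  rw [← ENNReal.zpow_add two_ne_zero ENNReal.ofNat_ne_top]
  ring_nf

theorem withDensity_envelope_iterSet (c : ℕ → ℤ) (k : ℤ) (A : Set (ℕ × ℤ)) :
    Measure.count.withDensity (envelope c) (iterSet shift k A) =
      2 ^ k * Measure.count.withDensity (envelope c) A := by
  rw [iterSet_eq_image_zpow, withDensity_count_image_equiv, envelope_comp_shift_zpow,
    withDensity_smul _ Measurable.of_discrete]
  rfl

theorem envelope_zero_le_weight : envelope 0 ≤ weight :=
  fun x => ENNReal.zpow_le_of_le one_le_two (by simpa using (exponent_mem_Icc x.1 x.2).1)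

theorem weight_le_envelope_peak : weight ≤ envelope (2 * peak ·) :=
  fun x => ENNReal.zpow_le_of_le one_le_two (exponent_mem_Icc x.1 x.2).2

theorem withDensity_envelope_ne_zero (c : ℕ → ℤ) {A : Set (ℕ × ℤ)} (hA : A.Nonempty) :
    Measure.count.withDensity (envelope c) A ≠ 0 := by
  obtain ⟨x, hx⟩ := hA
  rw [withDensity_count_apply]
  intro h
  have hx0 := ENNReal.tsum_eq_zero.1 h x
  rw [indicator_of_mem hx, envelope] at hx0
  exact (ENNReal.zpow_pos two_ne_zero ENNReal.ofNat_ne_top _).ne' hx0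

theorem withDensity_envelope_peak_ne_top {A : Set (ℕ × ℤ)} (hA : weightedMeasure A ≠ ∞) :
    Measure.count.withDensity (envelope (2 * peak ·)) A ≠ ∞ := by
  rw [withDensity_count_apply] at hA ⊢
  refine ENNReal.tsum_ne_top_of_le_of_lt_one hA (fun x => ?_) fun x hx => ?_
  · by_cases hxA : x ∈ A <;> simp [hxA, envelope, ENNReal.zpow_ne_top]
  · by_cases hxA : x ∈ A
    · have hneg : exponent x.1 x.2 < 0 := by
        by_contra! h
        simpa [indicator_of_mem hxA, weight] using
          hx.trans_le (ENNReal.zpow_le_of_le one_le_two h)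
      simp [indicator_of_mem hxA, weight, envelope, exponent_of_neg hneg]
    · simp [hxA]

theorem weightedMeasure_ne_zero {A : Set (ℕ × ℤ)} (hA : A.Nonempty) : weightedMeasure A ≠ 0 :=
  fun h => withDensity_envelope_ne_zero 0 hA
    (le_zero_iff.1 (h ▸ withDensity_mono (ae_of_all _ envelope_zero_le_weight) A))

theorem iSup_weightedMeasure_iterSet_div_lt_top {A : Set (ℕ × ℤ)}
    (hA0 : weightedMeasure A ≠ 0) (hA : weightedMeasure A ≠ ∞) :
    (⨆ (k : ℤ) (l : ℤ) (_ : k < l),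
      weightedMeasure (iterSet shift k A) / weightedMeasure (iterSet shift l A)) < ∞ := by
  refine iSup_div_lt_top_of_zpow_bounds one_le_two ENNReal.ofNat_ne_top
    (withDensity_envelope_ne_zero 0 (nonempty_of_measure_ne_zero hA0))
    (withDensity_envelope_peak_ne_top hA) (fun k => ?_) fun k => ?_
  · rw [← withDensity_envelope_iterSet]
    exact withDensity_mono (ae_of_all _ envelope_zero_le_weight) _
  · rw [← withDensity_envelope_iterSet]
    exact withDensity_mono (ae_of_all _ weight_le_envelope_peak) _

variable (p : ℝ≥0∞)

def semiIrregularVector (x : ℕ × ℤ) : ℝ :=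
  if x.2 = 0 then (((2 : ℝ≥0∞) ^ (-(peak x.1 : ℤ))) ^ (1 / p.toReal)).toReal else 0

def orbitMass (n : ℕ) : ℝ≥0∞ := ∑' i : ℕ, weight (i, -n) * 2 ^ (-(peak i : ℤ))

theorem eLpNorm_semiIrregularVector_comp_iterate (hp0 : p ≠ 0) (hp : p ≠ ∞) (n : ℕ) :
    eLpNorm (semiIrregularVector p ∘ shift^[n]) p weightedMeasure =
      orbitMass n ^ (1 / p.toReal) := by
  have hp' : 0 < p.toReal := ENNReal.toReal_pos hp0 hp
  rw [eLpNorm_eq_lintegral_rpow_enorm_toReal hp0 hp, lintegral_withDensity_count,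
    ENNReal.tsum_prod', orbitMass]
  congr 1
  refine tsum_congr fun i => (tsum_eq_single (-(n : ℤ)) fun m hm => ?_).trans ?_
  · have : m + n ≠ 0 := by omega
    simp [shift_iterate_apply, semiIrregularVector, this, ENNReal.zero_rpow_of_pos hp']
  · simp only [Function.comp_apply, shift_iterate_apply, semiIrregularVector, neg_add_cancel,
      ↓reduceIte]
    rw [Real.enorm_of_nonneg ENNReal.toReal_nonneg, ENNReal.ofReal_toReal, one_div,
      ENNReal.rpow_inv_rpow hp'.ne']
    exact ENNReal.rpow_ne_top_of_nonneg (by positivity)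
      (ENNReal.zpow_ne_top two_ne_zero ENNReal.ofNat_ne_top _)

theorem orbitMass_le {n : ℕ} {j : ℤ} (h : ∀ i : ℕ, exponent i (-n) - peak i ≤ -(1 + i + j)) :
    orbitMass n ≤ 2 ^ (-j) := by
  have two_zpow_add := ENNReal.zpow_add (x := 2) two_ne_zero ENNReal.ofNat_ne_top
  calc orbitMass n ≤ ∑' i : ℕ, 2 ^ (-(1 + j)) * 2⁻¹ ^ i := ENNReal.tsum_le_tsum fun i => ?_
    _ = 2 ^ (-(1 + j)) * 2 ^ (1 : ℤ) := by
      rw [ENNReal.tsum_mul_left, ENNReal.tsum_geometric, ENNReal.one_sub_inv_two, inv_inv,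
        zpow_one]
    _ = 2 ^ (-j) := by rw [← two_zpow_add]; ring_nf
  rw [weight, ← two_zpow_add, ← ENNReal.inv_pow, ← zpow_natCast, ← ENNReal.zpow_neg,
    ← two_zpow_add]
  exact ENNReal.zpow_le_of_le one_le_two (by have := h i; dsimp only; omega)

theorem one_le_orbitMass_peak (j : ℕ) : 1 ≤ orbitMass (peak j) :=
  calc 1 = weight (j, -peak j) * 2 ^ (-(peak j : ℤ)) := by
        rw [weight, exponent_neg_peak, ← ENNReal.zpow_add two_ne_zero ENNReal.ofNat_ne_top,
          add_neg_cancel, zpow_zero]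
    _ ≤ orbitMass (peak j) := ENNReal.le_tsum j

theorem tendsto_orbitMass_two_mul_peak :
    Tendsto (fun j => orbitMass (2 * peak j)) atTop (𝓝 0) := by
  refine tendsto_of_tendsto_of_tendsto_of_le_of_le tendsto_const_nhds
    (ENNReal.tendsto_pow_atTop_nhds_zero_of_lt_one (by norm_num : (2 : ℝ≥0∞)⁻¹ < 1))
    (fun _ => zero_le) fun j => ?_
  rw [← ENNReal.inv_pow, ← zpow_natCast, ← ENNReal.zpow_neg]
  exact orbitMass_le fun i => by push_cast; exact exponent_neg_two_mul_peak_sub_peak_le i j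

theorem memLp_semiIrregularVector (hp0 : p ≠ 0) (hp : p ≠ ∞) :
    MemLp (semiIrregularVector p) p weightedMeasure := by
  refine ⟨Measurable.of_discrete.aestronglyMeasurable, ?_⟩
  have hbound : orbitMass 0 ≤ 1 := by
    simpa using orbitMass_le (n := 0) (j := 0) fun i => by
      have := two_mul_add_two_le_peak i
      simp [exponent]; omega
  rw [← Function.comp_id (semiIrregularVector p), ← Function.iterate_zero shift,
    eLpNorm_semiIrregularVector_comp_iterate p hp0 hp 0]
  exact ENNReal.rpow_lt_top_of_nonneg (one_div_nonneg.2 ENNReal.toReal_nonneg)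
    (hbound.trans_lt ENNReal.one_lt_top).ne

theorem map_shift_le : weightedMeasure.map shift ≤ (2 : ℝ≥0∞) • weightedMeasure := by
  simpa using map_le_smul_of_le_measure_image Measurable.of_discrete shift.surjective
    (by norm_num) (by norm_num) fun B _ => (weightedMeasure_image_shift_mem_Icc B).1

theorem liYorkeChaotic_compLp_shift [Fact (1 ≤ p)] (hp : p ≠ ∞) :
    LiYorkeChaotic
      (compLp p (E := ℝ) Measurable.of_discrete map_shift_le ENNReal.ofNat_ne_top) := by
  set T := compLp p (E := ℝ) Measurable.of_discrete map_shift_le ENNReal.ofNat_ne_top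
  have hp0 : p ≠ 0 := (zero_lt_one.trans_le Fact.out).ne'
  set u := (memLp_semiIrregularVector p hp0 hp).toLp _
  have heLpNorm (n : ℕ) :
      eLpNorm (T^[n] u) p weightedMeasure = orbitMass n ^ (1 / p.toReal) := by
    rw [eLpNorm_congr_ae (compLp_iterate_toLp_ae_eq _ _ _ _ n),
      eLpNorm_semiIrregularVector_comp_iterate p hp0 hp]
  have hnorm (n : ℕ) : ‖T^[n] u‖ = (orbitMass n ^ (1 / p.toReal)).toReal := by
    rw [Lp.norm_def, heLpNorm]
  have hp' : 0 < 1 / p.toReal := one_div_pos.2 (ENNReal.toReal_pos hp0 hp)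
  refine liYorkeChaotic_of_semiIrregular T u (fun ε hε => ?_) ⟨1 / 2, by norm_num, ?_⟩
  · have hsmall : Tendsto (fun j => ‖T^[2 * peak j] u‖) atTop (𝓝 0) := by
      have := ((ENNReal.continuous_rpow_const (y := 1 / p.toReal)).tendsto 0).comp
        tendsto_orbitMass_two_mul_peak
      rw [ENNReal.zero_rpow_of_pos hp'] at this
      simpa only [hnorm, ENNReal.toReal_zero, Function.comp_def] using
        (ENNReal.tendsto_toReal ENNReal.zero_ne_top).comp this
    have htwo_mul_peak : Tendsto (fun j => 2 * peak j) atTop atTop :=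
      (tendsto_id.const_mul_atTop' two_pos).comp peak_strictMono.tendsto_atTop
    exact htwo_mul_peak.frequently (hsmall.eventually (gt_mem_nhds hε)).frequently
  · refine peak_strictMono.tendsto_atTop.frequently (Frequently.of_forall fun j => ?_)
    have h1 : 1 ≤ orbitMass (peak j) ^ (1 / p.toReal) :=
      ENNReal.one_le_rpow (one_le_orbitMass_peak j) hp'
    have h2 : orbitMass (peak j) ^ (1 / p.toReal) ≠ ∞ :=
      heLpNorm (peak j) ▸ Lp.eLpNorm_ne_top _
    rw [hnorm]
    have := ENNReal.toReal_mono h2 h1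
    rw [ENNReal.toReal_one] at this
    linarith

end ShiftExample

/-- **Example (the converse of Corollary 1 fails).** For every `1 ≤ p < ∞` there exist a
σ-finite measure space `(X, 𝓑, μ)` and a bijective bimeasurable map `f : X → X` which is
bi-Lipschitz with respect to `μ` such that the composition operator `T_f` on `L^p` is
Li-Yorke chaotic, and yet for every measurable `A` with `0 < μ(A) < ∞` one has
`sup { μ(f^k(A)) / μ(f^l(A)) : k, l ∈ ℤ, k < l } < ∞`. -/
theorem exists_liYorke_with_bounded_ratios
    (p : ℝ≥0∞) [Fact (1 ≤ p)] (hp : p ≠ ∞) :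
    ∃ (X : Type) (_ : MeasurableSpace X) (μ : Measure X) (f : X → X) (c₁ c₂ : ℝ≥0∞),
      SigmaFinite μ ∧ μ Set.univ ≠ 0 ∧
      Function.Bijective f ∧ Measurable f ∧
      (∀ B : Set X, MeasurableSet B → MeasurableSet (f '' B)) ∧
      0 < c₁ ∧ c₁ < c₂ ∧ c₂ < ∞ ∧
      (∀ B : Set X, MeasurableSet B →
        c₁ * μ B ≤ μ (f '' B) ∧ μ (f '' B) ≤ c₂ * μ B) ∧
      (∃ T : Lp ℝ p μ →L[ℝ] Lp ℝ p μ,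
        (∀ φ : Lp ℝ p μ, ⇑(T φ) =ᵐ[μ] fun x => φ (f x)) ∧
        LiYorkeChaotic (⇑T)) ∧
      (∀ A : Set X, MeasurableSet A → 0 < μ A → μ A < ∞ →
        (⨆ (k : ℤ) (l : ℤ) (_ : k < l),
          μ (iterSet f k A) / μ (iterSet f l A)) < ∞) := by
  open ShiftExample in
  refine ⟨ℕ × ℤ, inferInstance, weightedMeasure, shift, 2⁻¹, 2,
    SigmaFinite.withDensity_of_ne_top' weight_ne_top, weightedMeasure_ne_zero univ_nonempty,
    shift.bijective, Measurable.of_discrete, fun _ _ => MeasurableSet.of_discrete, by norm_num,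
    (by norm_num : (2 : ℝ≥0∞)⁻¹ < 1).trans ENNReal.one_lt_two, by norm_num,
    fun B _ => weightedMeasure_image_shift_mem_Icc B,
    ⟨compLp p Measurable.of_discrete map_shift_le ENNReal.ofNat_ne_top, compLp_ae_eq _ _ _,
      liYorkeChaotic_compLp_shift p hp⟩,
    fun A _ hA0 hA => iSup_weightedMeasure_iterSet_div_lt_top hA0.ne' hA.ne⟩
end
end

section
/- Assume that f is injective. If there exists B ∈ 𝓑 with 0 < μ(B) < ∞ such that liminf_{n→∞} μ(f^{-n}(B)) = 0 and liminf_{n→∞} μ(f^n(B)) = 0, then there exists a measurable set A with μ(A) > 0 such that liminf_{n→∞} μ(f^{-n}(A)) = 0 and limsup_{n→∞} μ(f^{-n}(A)) > 0. -/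
/-!
If `μ(f⁻ⁿ B)` does not tend to `0`, the set `B` itself works. Otherwise take
`A = ⋃ₖ f^{Nₖ}(B)` along a sparse sequence `Nₖ`. By injectivity `f^{-Nₖ}(A) ⊇ B`, so the
limsup stays positive. At suitable times `Tⱼ` between `Nⱼ` and `Nⱼ₊₁`, the piece
`f^{-Tⱼ}(f^{Nₖ} B)` is `f^{-(Tⱼ - Nₖ)}(B)` for `k ≤ j`, small because `Tⱼ - Nₖ` is large, and
`f^{Nₖ - Tⱼ}(B)` for `k > j`, of measure at most `c^{-Tⱼ} μ(f^{Nₖ} B)`, small because `Nₖ`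
was chosen (using `liminf μ(fⁿ B) = 0`) after `Tⱼ` with `μ(f^{Nₖ} B)` tiny.
-/

open MeasureTheory Filter Set Topology
open scoped ENNReal

noncomputable section

open Function

theorem ENNReal.tsum_le_inv_two_pow {g : ℕ → ℝ≥0∞} {j : ℕ}
    (hhead : ∀ k ≤ j, g k ≤ 2⁻¹ ^ (j + 1) / (j + 1)) (htail : ∀ k, j < k → g k ≤ 2⁻¹ ^ (k + 1)) :
    ∑' k, g k ≤ 2⁻¹ ^ j := by
  rw [← ENNReal.summable.sum_add_tsum_nat_add' (k := j + 1)]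
  have hhead_sum : ∑ k ∈ Finset.range (j + 1), g k ≤ 2⁻¹ ^ (j + 1) := by
    calc ∑ k ∈ Finset.range (j + 1), g k
        ≤ ∑ _k ∈ Finset.range (j + 1), 2⁻¹ ^ (j + 1) / ((j : ℝ≥0∞) + 1) :=
          Finset.sum_le_sum fun k hk => hhead k (Nat.lt_succ_iff.1 (Finset.mem_range.1 hk))
      _ = 2⁻¹ ^ (j + 1) := by
          rw [Finset.sum_const, Finset.card_range, nsmul_eq_mul, Nat.cast_succ,
            ENNReal.mul_div_cancel (by positivity) (by simp)]
  have htail_sum : ∑' i, g (i + (j + 1)) ≤ 2⁻¹ ^ (j + 1) := by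
    calc ∑' i, g (i + (j + 1))
        ≤ ∑' i, 2⁻¹ ^ (j + 1) * 2⁻¹ ^ (i + 1) :=
          ENNReal.tsum_le_tsum fun i => (htail _ (by omega)).trans_eq (by ring)
      _ = 2⁻¹ ^ (j + 1) := by
          rw [ENNReal.tsum_mul_left, ENNReal.tsum_geometric_add_one, ENNReal.one_sub_inv_two,
            ENNReal.mul_inv_cancel (by simp) (by simp), mul_one]
  calc _ ≤ (2⁻¹ : ℝ≥0∞) ^ (j + 1) + 2⁻¹ ^ (j + 1) := add_le_add hhead_sum htail_sum
    _ = 2⁻¹ ^ j := by rw [pow_succ, ← mul_add, ENNReal.inv_two_add_inv_two, mul_one]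

theorem exists_strictMono_tsum_le_inv_two_pow (w : ℕ → ℕ → ℝ≥0∞) (u : ℕ → ℝ≥0∞)
    (hu : Tendsto u atTop (𝓝 0)) (hwu : ∀ n t, n ≤ t → w t n ≤ u (t - n))
    (hrow : ∀ t, ∀ ε > 0, ∃ᶠ n in atTop, ∀ s ≤ t, w s n < ε) :
    ∃ N T : ℕ → ℕ, StrictMono N ∧ StrictMono T ∧ ∀ j, ∑' k, w (T j) (N k) ≤ 2⁻¹ ^ j := by
  have hδ : ∀ j : ℕ, (0 : ℝ≥0∞) < 2⁻¹ ^ (j + 1) / (j + 1) := fun j =>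
    ENNReal.div_pos (by simp) (by simp)
  choose M hM using fun j => eventually_atTop.1 ((tendsto_order.1 hu).2 _ (hδ j))
  choose next hnext_gt hnext using fun k t =>
    frequently_atTop.1 (hrow t (2⁻¹ ^ (k + 1)) (ENNReal.pow_pos (by simp) _)) (t + 1)
  -- `Tⱼ - Nₖ ≥ Mⱼ` for `k ≤ j` controls the earlier columns at time `Tⱼ`, and `Nₖ` for `k > j`
  -- is picked after `Tₖ₋₁ ≥ Tⱼ` with the rows up to `Tₖ₋₁` below `2⁻¹ ^ (k + 1)`.
  let N : ℕ → ℕ := fun k => Nat.rec 0 (fun k Nk => next (k + 1) (Nk + M k)) k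
  let T : ℕ → ℕ := fun k => N k + M k
  have hTN : ∀ k, T k < N (k + 1) := fun k => hnext_gt _ _
  have hN : StrictMono N :=
    strictMono_nat_of_lt_succ fun k => (Nat.le_add_right _ _).trans_lt (hTN k)
  have hT : StrictMono T :=
    strictMono_nat_of_lt_succ fun k => (hTN k).trans_le (Nat.le_add_right _ _)
  refine ⟨N, T, hN, hT, fun j => ENNReal.tsum_le_inv_two_pow (fun k hk => ?_) (fun k hk => ?_)⟩
  · exact (hwu _ _ ((hN.monotone hk).trans (Nat.le_add_right _ _))).trans
      (hM j _ (by have := hN.monotone hk; omega)).le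
  · obtain ⟨i, rfl⟩ : ∃ i, k = i + 1 := ⟨k - 1, by omega⟩
    exact (hnext (i + 1) (T i) _ (hT.monotone (by omega))).le

theorem exists_strictMono_liminf_tsum_eq_zero (w : ℕ → ℕ → ℝ≥0∞) (u : ℕ → ℝ≥0∞)
    (hu : Tendsto u atTop (𝓝 0)) (hwu : ∀ n t, n ≤ t → w t n ≤ u (t - n))
    (hrow : ∀ t, ∀ ε > 0, ∃ᶠ n in atTop, ∀ s ≤ t, w s n < ε) :
    ∃ N : ℕ → ℕ, StrictMono N ∧ atTop.liminf (fun t => ∑' k, w t (N k)) = 0 := by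
  obtain ⟨N, T, hN, hT, hbound⟩ := exists_strictMono_tsum_le_inv_two_pow w u hu hwu hrow
  have hsub : Tendsto (fun j => ∑' k, w (T j) (N k)) atTop (𝓝 0) :=
    tendsto_of_tendsto_of_tendsto_of_le_of_le tendsto_const_nhds
      (ENNReal.tendsto_pow_atTop_nhds_zero_of_lt_one (by norm_num)) (fun _ => zero_le) hbound
  exact ⟨N, hN,
    le_antisymm (hT.tendsto_atTop.liminf_le_liminf_comp.trans hsub.liminf_eq.le) zero_le⟩

namespace Function.Injective

variable {α : Type*} {f : α → α}

theorem preimage_iterate_image_iterate_of_le (hf : Injective f) (s : Set α) {m n : ℕ}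
    (h : m ≤ n) : f^[m] ⁻¹' (f^[n] '' s) = f^[n - m] '' s := by
  obtain ⟨k, rfl⟩ := Nat.exists_eq_add_of_le h
  rw [Nat.add_sub_cancel_left, iterate_add, image_comp, (hf.iterate m).preimage_image]

theorem preimage_iterate_image_iterate_of_ge (hf : Injective f) (s : Set α) {m n : ℕ}
    (h : n ≤ m) : f^[m] ⁻¹' (f^[n] '' s) = f^[m - n] ⁻¹' s := by
  obtain ⟨k, rfl⟩ := Nat.exists_eq_add_of_le h
  rw [Nat.add_sub_cancel_left, iterate_add, preimage_comp, (hf.iterate n).preimage_image]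

end Function.Injective

section ExpandingMap

variable {X : Type*} [MeasurableSpace X] {μ : Measure X} {f : X → X} {c : ℝ≥0∞}

theorem MeasurableSet.image_iterate (hfim : ∀ s, MeasurableSet s → MeasurableSet (f '' s))
    {s : Set X} (hs : MeasurableSet s) (n : ℕ) : MeasurableSet (f^[n] '' s) := by
  induction n with
  | zero => simpa using hs
  | succ n ih => rw [iterate_succ', image_comp]; exact hfim _ ih

theorem pow_mul_measure_le_measure_image_iterate
    (hfim : ∀ s, MeasurableSet s → MeasurableSet (f '' s))
    (hcf : ∀ s, MeasurableSet s → c * μ s ≤ μ (f '' s)) {s : Set X} (hs : MeasurableSet s)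
    (n : ℕ) : c ^ n * μ s ≤ μ (f^[n] '' s) := by
  induction n with
  | zero => simp
  | succ n ih =>
    rw [iterate_succ', image_comp, pow_succ', mul_assoc]
    exact (mul_le_mul_right ih c).trans (hcf _ (hs.image_iterate hfim n))

theorem pow_mul_measure_preimage_iterate_image_iterate_le (hinj : Injective f)
    (hfim : ∀ s, MeasurableSet s → MeasurableSet (f '' s))
    (hcf : ∀ s, MeasurableSet s → c * μ s ≤ μ (f '' s)) (hc1 : c ≤ 1) {s : Set X}
    (hs : MeasurableSet s) {m t n : ℕ} (hmt : m ≤ t) (htn : t ≤ n) :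
    c ^ t * μ (f^[m] ⁻¹' (f^[n] '' s)) ≤ μ (f^[n] '' s) := by
  rw [hinj.preimage_iterate_image_iterate_of_le s (hmt.trans htn)]
  calc c ^ t * μ (f^[n - m] '' s)
      ≤ c ^ m * μ (f^[n - m] '' s) :=
        mul_le_mul_left (pow_le_pow_of_le_one zero_le hc1 hmt) _
    _ ≤ μ (f^[m] '' (f^[n - m] '' s)) :=
        pow_mul_measure_le_measure_image_iterate hfim hcf (hs.image_iterate hfim _) m
    _ = μ (f^[n] '' s) := by
        rw [← image_comp, ← iterate_add, Nat.add_sub_cancel' (hmt.trans htn)]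

theorem frequently_forall_le_measure_preimage_iterate_image_iterate_lt (hinj : Injective f)
    (hfim : ∀ s, MeasurableSet s → MeasurableSet (f '' s)) (hc : c ≠ 0)
    (hcf : ∀ s, MeasurableSet s → c * μ s ≤ μ (f '' s)) (hc1 : c ≤ 1) {s : Set X}
    (hs : MeasurableSet s) (hlim : atTop.liminf (fun n : ℕ => μ (f^[n] '' s)) = 0)
    (t : ℕ) {ε : ℝ≥0∞} (hε : 0 < ε) :
    ∃ᶠ n in atTop, ∀ m ≤ t, μ (f^[m] ⁻¹' (f^[n] '' s)) < ε := by
  have hct : c ^ t ≠ 0 := pow_ne_zero _ hc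
  have hct' : c ^ t ≠ ∞ := ENNReal.pow_ne_top (hc1.trans_lt ENNReal.one_lt_top).ne
  have hsmall : ∃ᶠ n in atTop, μ (f^[n] '' s) < c ^ t * ε :=
    frequently_lt_of_liminf_lt (by isBoundedDefault) (hlim ▸ ENNReal.mul_pos hct hε.ne')
  refine (hsmall.and_eventually (eventually_ge_atTop t)).mono fun n ⟨hn, htn⟩ m hmt => ?_
  exact (ENNReal.mul_lt_mul_iff_right hct hct').1 <|
    (pow_mul_measure_preimage_iterate_image_iterate_le hinj hfim hcf hc1 hs hmt htn).trans_lt hn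

end ExpandingMap

theorem exists_set_liminf_zero_limsup_pos_general
    {X : Type*} [MeasurableSpace X] (μ : Measure X)
    (f : X → X)
    (hfim : ∀ B : Set X, MeasurableSet B → MeasurableSet (f '' B))
    (c : ℝ≥0∞) (hc : 0 < c)
    (hcf : ∀ B : Set X, MeasurableSet B → c * μ B ≤ μ (f '' B))
    (hinj : Function.Injective f)
    (B : Set X) (hB : MeasurableSet B) (hB0 : 0 < μ B)
    (h₁ : atTop.liminf (fun n : ℕ => μ (f^[n] ⁻¹' B)) = 0)
    (h₂ : atTop.liminf (fun n : ℕ => μ (f^[n] '' B)) = 0) :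
    ∃ A : Set X, MeasurableSet A ∧ 0 < μ A ∧
      atTop.liminf (fun n : ℕ => μ (f^[n] ⁻¹' A)) = 0 ∧
      0 < atTop.limsup (fun n : ℕ => μ (f^[n] ⁻¹' A)) := by
  by_cases hpos : 0 < atTop.limsup (fun n : ℕ => μ (f^[n] ⁻¹' B))
  · exact ⟨B, hB, hB0, h₁, hpos⟩
  have hpre : Tendsto (fun n : ℕ => μ (f^[n] ⁻¹' B)) atTop (𝓝 0) :=
    tendsto_of_le_liminf_of_limsup_le zero_le (not_lt.1 hpos)
  have hcf' : ∀ s, MeasurableSet s → min c 1 * μ s ≤ μ (f '' s) := fun s hs =>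
    (mul_le_mul_left (min_le_left c 1) _).trans (hcf s hs)
  obtain ⟨N, hN, hlim⟩ := exists_strictMono_liminf_tsum_eq_zero
    (fun t n => μ (f^[t] ⁻¹' (f^[n] '' B))) _ hpre
    (fun n t hnt => (congrArg μ (hinj.preimage_iterate_image_iterate_of_ge B hnt)).le)
    (fun t _ hε => frequently_forall_le_measure_preimage_iterate_image_iterate_lt hinj hfim
      (lt_min hc one_pos).ne' hcf' (min_le_right c 1) hB h₂ t hε)
  refine ⟨⋃ k, f^[N k] '' B, .iUnion fun k => hB.image_iterate hfim _, ?_, ?_, ?_⟩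
  · calc 0 < c ^ N 0 * μ B := ENNReal.mul_pos (pow_ne_zero _ hc.ne') hB0.ne'
      _ ≤ μ (f^[N 0] '' B) := pow_mul_measure_le_measure_image_iterate hfim hcf hB _
      _ ≤ μ (⋃ k, f^[N k] '' B) := measure_mono (subset_iUnion (fun k => f^[N k] '' B) 0)
  · refine le_antisymm ((liminf_le_liminf (.of_forall fun t => ?_)).trans hlim.le) zero_le
    rw [preimage_iUnion]
    exact measure_iUnion_le _
  · refine hB0.trans_le (le_limsup_of_frequently_le (hN.tendsto_atTop.frequently
      (.of_forall fun k => measure_mono ?_)))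
    exact (subset_preimage_image _ B).trans (preimage_mono (subset_iUnion_of_subset k subset_rfl))

/-- **(LY5) ⇒ (LY6) (measure-theoretic form).** Assume `f` injective. If there is a
measurable `B` with `0 < μ(B) < ∞`, `liminf μ(f^{-n}(B)) = 0` and
`liminf μ(f^n(B)) = 0`, then there is a measurable set `A` with `μ(A) > 0`,
`liminf μ(f^{-n}(A)) = 0` and `limsup μ(f^{-n}(A)) > 0`. -/
theorem exists_set_liminf_zero_limsup_pos
    {X : Type*} [MeasurableSpace X] (μ : Measure X) (hX : μ Set.univ ≠ 0)
    (f : X → X) (hf : Measurable f)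
    (hfim : ∀ B : Set X, MeasurableSet B → MeasurableSet (f '' B))
    (c : ℝ≥0∞) (hc : 0 < c)
    (hcf : ∀ B : Set X, MeasurableSet B → c * μ B ≤ μ (f '' B))
    (hinj : Function.Injective f)
    (B : Set X) (hB : MeasurableSet B) (hB0 : 0 < μ B) (hBfin : μ B < ∞)
    (h₁ : atTop.liminf (fun n : ℕ => μ (f^[n] ⁻¹' B)) = 0)
    (h₂ : atTop.liminf (fun n : ℕ => μ (f^[n] '' B)) = 0) :
    ∃ A : Set X, MeasurableSet A ∧ 0 < μ A ∧
      atTop.liminf (fun n : ℕ => μ (f^[n] ⁻¹' A)) = 0 ∧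
      0 < atTop.limsup (fun n : ℕ => μ (f^[n] ⁻¹' A)) :=
  exists_set_liminf_zero_limsup_pos_general μ f hfim c hc hcf hinj B hB hB0 h₁ h₂
end
end

section
/- Let X = ℤ, 𝓑 = 𝒫(ℤ), f : i ↦ i+1, and let μ be the σ-finite measure on 𝒫(ℤ) determined by μ({i}) = 2^i for i ≤ −1 and μ({i}) = 1 for i ≥ 0. Then μ(B) ≤ μ(f(B)) ≤ 2·μ(B) for every B ⊆ ℤ (so T_f is a well-defined continuous linear operator on L^p(ℤ,𝒫(ℤ),μ)), and lim_{n→∞} ‖T_f^n φ‖ = 0 for every φ ∈ L^p(ℤ,𝒫(ℤ),μ). In particular, T_f is not Li-Yorke chaotic, even though the set B = {0} satisfies μ(B) > 0 and lim_{n→∞} μ(f^{-n}(B)) = 0. -/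
/-!
Every weight `μ {i}` is positive, so the almost-everywhere identity `T φ = φ (· + 1)` holds
pointwise and `Tⁿ φ = φ (· + n)`. Then `‖Tⁿ φ‖ₚᵖ = ∑ⱼ |φ j|ᵖ μ {j - n}`; since the weights
increase with `i` and vanish as `i → -∞`, this sum is dominated by `∑ⱼ |φ j|ᵖ μ {j} = ‖φ‖ₚᵖ`
and each of its terms tends to `0`, so every orbit tends to `0` by dominated convergence.
Orbits with a common limit leave no room for a Li-Yorke pair. The bounds
`μ B ≤ μ (B + 1) ≤ 2 μ B` hold on singletons, hence on all sets, because a measure on a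
countable discrete space is the sum of its point masses.
-/
open MeasureTheory Filter Set Topology
open scoped ENNReal

noncomputable section

theorem not_liYorkeChaotic_of_tendsto_iterate {M : Type*} [PseudoMetricSpace M] {g : M → M}
    (z : M) (h : ∀ x, Tendsto (fun n => g^[n] x) atTop (𝓝 z)) : ¬ LiYorkeChaotic g := by
  rintro ⟨S, hS, hscrambled⟩
  obtain ⟨x, hx, y, hy, hxy⟩ : S.Nontrivial :=
    not_subsingleton_iff.mp fun hsub => hS hsub.countable
  obtain ⟨ε, hε, hfreq⟩ := (hscrambled x hx y hy hxy).2
  have hdist : Tendsto (fun n => dist (g^[n] x) (g^[n] y)) atTop (𝓝 0) := by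
    simpa using (h x).dist (h y)
  obtain ⟨n, hlt, hgt⟩ := (hfreq.and_eventually (hdist.eventually (gt_mem_nhds hε))).exists
  exact hlt.not_gt hgt

namespace MeasureTheory.Measure

variable {α : Type*} [MeasurableSpace α]

theorem le_of_forall_singleton_le [Countable α] [MeasurableSingletonClass α] {μ ν : Measure α}
    (h : ∀ a, μ {a} ≤ ν {a}) : μ ≤ ν := by
  rw [← sum_smul_dirac μ, ← sum_smul_dirac ν, Measure.le_iff]
  intro s hs
  simp only [sum_apply _ hs, smul_apply, smul_eq_mul]
  exact ENNReal.tsum_le_tsum fun a => mul_le_mul_left (h a) _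

theorem comap_singleton [DiscreteMeasurableSpace α] {f : α → α} (hf : Function.Injective f)
    (μ : Measure α) (a : α) : μ.comap f {a} = μ {f a} := by
  rw [comap_apply f hf (fun s _ => .of_discrete) μ .of_discrete, image_singleton]

variable [Countable α] [DiscreteMeasurableSpace α] {f : α → α} (hf : Function.Injective f)
  {μ ν : Measure α}
include hf

theorem le_measure_image_of_forall_singleton_le (h : ∀ a, ν {a} ≤ μ {f a}) (s : Set α) :
    ν s ≤ μ (f '' s) := by
  rw [← comap_apply f hf (fun s _ => .of_discrete) μ .of_discrete]
  exact le_of_forall_singleton_le (fun a => (comap_singleton hf μ a).symm ▸ h a) s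

theorem measure_image_le_of_forall_singleton_le (h : ∀ a, μ {f a} ≤ ν {a}) (s : Set α) :
    μ (f '' s) ≤ ν s := by
  rw [← comap_apply f hf (fun s _ => .of_discrete) μ .of_discrete]
  exact le_of_forall_singleton_le (fun a => (comap_singleton hf μ a).symm ▸ h a) s

end MeasureTheory.Measure

def dyadicWeight (i : ℤ) : ℝ≥0∞ := if i ≤ -1 then 2 ^ i else 1

theorem dyadicWeight_pos (i : ℤ) : 0 < dyadicWeight i := by
  unfold dyadicWeight
  split_ifs
  exacts [ENNReal.zpow_pos two_ne_zero ENNReal.ofNat_ne_top i, one_pos]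

theorem ENNReal.two_zpow_add_one (i : ℤ) : (2 : ℝ≥0∞) ^ (i + 1) = 2 * 2 ^ i := by
  rw [ENNReal.zpow_add two_ne_zero ENNReal.ofNat_ne_top, zpow_one, mul_comm]

theorem dyadicWeight_le_succ (i : ℤ) : dyadicWeight i ≤ dyadicWeight (i + 1) := by
  unfold dyadicWeight
  split_ifs with hi hi'
  · exact ENNReal.zpow_le_of_le one_le_two (by omega)
  · simpa using ENNReal.zpow_le_of_le one_le_two (show i ≤ 0 by omega)
  · omega
  · rfl

theorem dyadicWeight_succ_le (i : ℤ) : dyadicWeight (i + 1) ≤ 2 * dyadicWeight i := by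
  unfold dyadicWeight
  split_ifs with hi hi'
  · rw [ENNReal.two_zpow_add_one]
  · omega
  · obtain rfl : i = -1 := by omega
    simpa using (ENNReal.two_zpow_add_one (-1)).le
  · exact le_mul_of_one_le_left' one_le_two

theorem tendsto_dyadicWeight_atBot : Tendsto dyadicWeight atBot (𝓝 0) := by
  refine ENNReal.tendsto_nhds_zero.2 fun ε hε => ?_
  obtain ⟨n, hn⟩ := ENNReal.exists_inv_two_pow_lt hε.ne'
  filter_upwards [eventually_le_atBot (-(n : ℤ) - 1)] with i hi
  have h2n : (2 : ℝ≥0∞) ^ (-(n : ℤ)) = 2⁻¹ ^ n := by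
    rw [ENNReal.zpow_neg, zpow_natCast, ENNReal.inv_pow]
  rw [dyadicWeight, if_pos (by omega)]
  calc (2 : ℝ≥0∞) ^ i ≤ 2 ^ (-(n : ℤ)) := ENNReal.zpow_le_of_le one_le_two (by omega)
    _ ≤ ε := h2n ▸ hn.le

section Translation

variable {μ : Measure ℤ}

theorem lintegral_comp_add_eq_tsum (F : ℤ → ℝ≥0∞) (k : ℤ) :
    ∫⁻ i, F (i + k) ∂μ = ∑' j, F j * μ {j - k} := by
  rw [lintegral_countable', ← (Equiv.addRight k).tsum_eq fun j => F j * μ {j - k}]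
  simp

theorem tendsto_lintegral_comp_add_nat (hmono : Monotone fun i => μ {i})
    (hlim : Tendsto (fun i => μ {i}) atBot (𝓝 0)) {F : ℤ → ℝ≥0∞} (hF : ∀ i, F i ≠ ∞)
    (hint : ∫⁻ i, F i ∂μ ≠ ∞) :
    Tendsto (fun n : ℕ => ∫⁻ i, F (i + n) ∂μ) atTop (𝓝 0) := by
  simp only [lintegral_comp_add_eq_tsum, ← lintegral_count]
  rw [← lintegral_zero (μ := Measure.count (α := ℤ))]
  refine tendsto_lintegral_of_dominated_convergence (fun j => F j * μ {j})
    (fun _ => .of_discrete) (fun n => ae_of_all _ fun j => ?_) ?_ (ae_of_all _ fun j => ?_)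
  · exact mul_le_mul_right (hmono (show j - n ≤ j by omega)) _
  · rwa [lintegral_count, ← lintegral_countable']
  · have hshift : Tendsto (fun n : ℕ => j - n) atTop atBot :=
      tendsto_atBot_add_const_left _ j (tendsto_neg_atTop_atBot.comp tendsto_natCast_atTop_atTop)
    simpa using ENNReal.Tendsto.const_mul (hlim.comp hshift) (.inr (hF j))

theorem tendsto_norm_of_ae_eq_comp_add_nat {E : Type*} [NormedAddCommGroup E] {p : ℝ≥0∞}
    (hp0 : p ≠ 0) (hp : p ≠ ∞) (hmono : Monotone fun i => μ {i})
    (hlim : Tendsto (fun i => μ {i}) atBot (𝓝 0)) (φ : Lp E p μ) {ψ : ℕ → Lp E p μ}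
    (hψ : ∀ n, ψ n =ᵐ[μ] fun i => φ (i + n)) : Tendsto (fun n => ‖ψ n‖) atTop (𝓝 0) := by
  have hint := tendsto_lintegral_comp_add_nat hmono hlim
    (F := fun i => ‖φ i‖ₑ ^ p.toReal) (fun i => by finiteness)
    (lintegral_rpow_enorm_lt_top_of_eLpNorm_lt_top hp0 hp (Lp.eLpNorm_lt_top φ)).ne
  have hexp : 0 < 1 / p.toReal := one_div_pos.2 (ENNReal.toReal_pos hp0 hp)
  have heLp : Tendsto (fun n => eLpNorm (ψ n) p μ) atTop (𝓝 0) := by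
    simp_rw [eLpNorm_congr_ae (hψ _), eLpNorm_eq_lintegral_rpow_enorm_toReal hp0 hp]
    simpa only [ENNReal.zero_rpow_of_pos hexp] using hint.ennrpow_const (1 / p.toReal)
  simpa only [Lp.norm_def, Function.comp_def, ENNReal.toReal_zero] using
    (ENNReal.tendsto_toReal ENNReal.zero_ne_top).comp heLp

theorem iterate_apply_eq_comp_add {E : Type*} [NormedAddCommGroup E] {p : ℝ≥0∞}
    (hpos : ∀ i, μ {i} ≠ 0) {T : Lp E p μ → Lp E p μ}
    (hT : ∀ φ, ⇑(T φ) =ᵐ[μ] fun i => φ (i + 1)) (φ : Lp E p μ) (n : ℕ) (i : ℤ) :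
    T^[n] φ i = φ (i + n) := by
  induction n generalizing i with
  | zero => simp
  | succ n ih =>
    rw [Function.iterate_succ_apply']
    refine (ae_iff_of_countable.1 (hT _) i (hpos i)).trans ?_
    simp only [ih]
    push_cast
    ring_nf

theorem tendsto_iterate_of_ae_eq_comp_add_one {E : Type*} [NormedAddCommGroup E] {p : ℝ≥0∞}
    [Fact (1 ≤ p)] (hp : p ≠ ∞) (hpos : ∀ i, μ {i} ≠ 0) (hmono : Monotone fun i => μ {i})
    (hlim : Tendsto (fun i => μ {i}) atBot (𝓝 0)) {T : Lp E p μ → Lp E p μ}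
    (hT : ∀ φ, ⇑(T φ) =ᵐ[μ] fun i => φ (i + 1)) (φ : Lp E p μ) :
    Tendsto (fun n => T^[n] φ) atTop (𝓝 0) :=
  tendsto_zero_iff_norm_tendsto_zero.2 <| tendsto_norm_of_ae_eq_comp_add_nat
    (zero_lt_one.trans_le Fact.out).ne' hp hmono hlim φ
    fun n => ae_of_all _ (iterate_apply_eq_comp_add hpos hT φ n)

end Translation

/-- **Example (the finiteness of `μ` is essential).** Let `X = ℤ`, `f : i ↦ i + 1`, and
let `μ` be the measure on `𝒫(ℤ)` determined by `μ({i}) = 2^i` for `i ≤ -1` and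
`μ({i}) = 1` for `i ≥ 0`. Then `μ(B) ≤ μ(f(B)) ≤ 2·μ(B)` for every `B ⊆ ℤ`,
every orbit of `T_f` tends to `0` in norm, and in particular `T_f` is not Li-Yorke
chaotic, even though `B = {0}` satisfies `μ(B) > 0` and `μ(f^{-n}(B)) → 0`. -/
theorem shift_orbits_null_not_liYorke
    (μ : Measure ℤ)
    (hμ : ∀ i : ℤ, μ {i} = if i ≤ -1 then (2 : ℝ≥0∞) ^ i else 1)
    (p : ℝ≥0∞) [Fact (1 ≤ p)] (hp : p ≠ ∞)
    (T : Lp ℝ p μ →L[ℝ] Lp ℝ p μ)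
    (hT : ∀ φ : Lp ℝ p μ, ⇑(T φ) =ᵐ[μ] fun i => φ (i + 1)) :
    (∀ B : Set ℤ, μ B ≤ μ ((fun i : ℤ => i + 1) '' B) ∧
      μ ((fun i : ℤ => i + 1) '' B) ≤ 2 * μ B) ∧
    (∀ φ : Lp ℝ p μ, Tendsto (fun n : ℕ => ‖(T ^ n) φ‖) atTop (𝓝 0)) ∧
    ¬ LiYorkeChaotic (⇑T) ∧
    (0 < μ {(0 : ℤ)} ∧
      Tendsto (fun n : ℕ => μ ((fun i : ℤ => i + 1)^[n] ⁻¹' {(0 : ℤ)}))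
        atTop (𝓝 0)) := by
  have hweight : ∀ i, μ {i} = dyadicWeight i := hμ
  have hpos : ∀ i, μ {i} ≠ 0 := fun i => hweight i ▸ (dyadicWeight_pos i).ne'
  have hmono : Monotone fun i => μ {i} :=
    monotone_int_of_le_succ fun i => by simpa only [hweight] using dyadicWeight_le_succ i
  have hlim : Tendsto (fun i => μ {i}) atBot (𝓝 0) := by
    simpa only [hweight] using tendsto_dyadicWeight_atBot
  have horbit := tendsto_iterate_of_ae_eq_comp_add_one hp hpos hmono hlim hT
  have hinj : Function.Injective fun i : ℤ => i + 1 := add_left_injective 1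
  have hdouble : ∀ i, μ {i + 1} ≤ ((2 : ℝ≥0∞) • μ) {i} := fun i => by
    simpa only [hweight, Measure.smul_apply, smul_eq_mul] using dyadicWeight_succ_le i
  refine ⟨fun B => ⟨?_, ?_⟩, fun φ => ?_, not_liYorkeChaotic_of_tendsto_iterate 0 horbit,
    (hpos 0).bot_lt, ?_⟩
  · exact Measure.le_measure_image_of_forall_singleton_le hinj (fun i => hmono (by omega)) B
  · simpa only [Measure.smul_apply, smul_eq_mul] using
      Measure.measure_image_le_of_forall_singleton_le hinj hdouble B
  · simpa only [FunLike.coe_pow_eq_iterate, norm_zero] using (horbit φ).norm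
  · simpa [add_right_iterate, Function.comp_def] using
      hlim.comp (tendsto_neg_atTop_atBot.comp tendsto_natCast_atTop_atTop)
end
end
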